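/- arXiv:1310.1172 — 4 statements merged into one kernel-verified Lean document; each statement's English description precedes it below -/
import Mathlib

section
/- A (c\`adl\`ag) supermartingale $(Y_t)_{t\ge 0}$ is a closed supermartingale (i.e., bounded from below by a uniformly integrable martingale) if and only if the family of negative parts $(Y_t^-)_{t\ge 0}$ is uniformly integrable. -/
open MeasureTheory ProbabilityTheory Filter
open scoped ENNReal NNReal Topology

/-!
The negative part `Y⁻` of a supermartingale is a submartingale. If it is uniformly integrable,
it converges in `L¹` along the integer times to some `ξ`, and the submartingale inequality
`Y⁻_t ≤ 𝔼[Y⁻_n | ℱ_t]` passes to the limit, giving `Y_t ≥ -Y⁻_t ≥ 𝔼[-ξ | ℱ_t]`: the closing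
martingale is `t ↦ 𝔼[-ξ | ℱ_t]`. Conversely `M ≤ Y` gives `Y⁻ ≤ |M|`, so uniform integrability
passes from `M` to `Y⁻`.
-/

namespace MeasureTheory

variable {Ω ι κ : Type*} {m₀ : MeasurableSpace Ω} {μ : Measure Ω}

section UniformIntegrable

variable {β γ : Type*} [NormedAddCommGroup β] [NormedAddCommGroup γ] {p : ℝ≥0∞}

theorem UnifIntegrable.of_ae_norm_le {f : ι → Ω → β} {g : ι → Ω → γ} (hg : UnifIntegrable g p μ)
    (hfg : ∀ i, ∀ᵐ ω ∂μ, ‖f i ω‖ ≤ ‖g i ω‖) : UnifIntegrable f p μ := by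
  intro ε hε
  obtain ⟨δ, hδ, hg⟩ := hg hε
  refine ⟨δ, hδ, fun i s hs hμs => (eLpNorm_mono_ae ?_).trans (hg i s hs hμs)⟩
  filter_upwards [hfg i] with ω hω
  simp only [norm_indicator_eq_indicator_norm]
  exact Set.indicator_le_indicator hω

theorem UniformIntegrable.of_ae_norm_le {f : ι → Ω → β} {g : ι → Ω → γ}
    (hg : UniformIntegrable g p μ) (hf : ∀ i, AEStronglyMeasurable (f i) μ)
    (hfg : ∀ i, ∀ᵐ ω ∂μ, ‖f i ω‖ ≤ ‖g i ω‖) : UniformIntegrable f p μ :=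
  let ⟨C, hC⟩ := hg.2.2
  ⟨hf, hg.2.1.of_ae_norm_le hfg, C, fun i => (eLpNorm_mono_ae (hfg i)).trans (hC i)⟩

theorem UniformIntegrable.comp {f : ι → Ω → β} (hf : UniformIntegrable f p μ) (φ : κ → ι) :
    UniformIntegrable (f ∘ φ) p μ :=
  let ⟨C, hC⟩ := hf.2.2
  ⟨fun k => hf.1 (φ k), fun _ hε => let ⟨δ, hδ, h⟩ := hf.2.1 hε; ⟨δ, hδ, fun k => h (φ k)⟩,
    C, fun k => hC (φ k)⟩

end UniformIntegrable

theorem ae_le_of_tendsto_eLpNorm_one {l : Filter ι} [l.NeBot] {f g : Ω → ℝ} {G : ι → Ω → ℝ}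
    (hf : Integrable f μ) (hg : Integrable g μ)
    (hG : ∀ᶠ i in l, Integrable (G i) μ ∧ f ≤ᵐ[μ] G i)
    (hGg : Tendsto (fun i => eLpNorm (G i - g) 1 μ) l (𝓝 0)) : f ≤ᵐ[μ] g := by
  refine ae_le_of_forall_setIntegral_le hf hg fun s _ _ => ?_
  refine ge_of_tendsto (tendsto_setIntegral_of_L1' g hg.1 (hG.mono fun _ => And.left) hGg s) ?_
  filter_upwards [hG] with i ⟨hGi, hfG⟩
  exact setIntegral_mono_ae hf.integrableOn hGi.integrableOn hfG

theorem tendsto_eLpNorm_one_condExp_sub {E : Type*} [NormedAddCommGroup E] [NormedSpace ℝ E]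
    [CompleteSpace E] {m : MeasurableSpace Ω} {l : Filter ι} {F : ι → Ω → E} {f : Ω → E}
    (hF : ∀ i, Integrable (F i) μ) (hf : Integrable f μ)
    (hFf : Tendsto (fun i => eLpNorm (F i - f) 1 μ) l (𝓝 0)) :
    Tendsto (fun i => eLpNorm (μ[F i | m] - μ[f | m]) 1 μ) l (𝓝 0) := by
  refine tendsto_of_tendsto_of_tendsto_of_le_of_le tendsto_const_nhds hFf (fun _ => zero_le)
    fun i => ?_
  rw [← eLpNorm_congr_ae (condExp_sub (hF i) hf m)]
  exact eLpNorm_condExp_le_eLpNorm _ le_rfl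

def Filtration.comp [Preorder ι] [Preorder κ] (ℱ : Filtration ι m₀) {φ : κ → ι}
    (hφ : Monotone φ) : Filtration κ m₀ where
  seq k := ℱ (φ k)
  mono' _ _ hkl := ℱ.mono (hφ hkl)
  le' k := ℱ.le (φ k)

theorem Submartingale.comp {E : Type*} [NormedAddCommGroup E] [NormedSpace ℝ E]
    [CompleteSpace E] [LE E] [Preorder ι] [Preorder κ] {ℱ : Filtration ι m₀} {f : ι → Ω → E}
    (hf : Submartingale f ℱ μ) {φ : κ → ι} (hφ : Monotone φ) :
    Submartingale (f ∘ φ) (ℱ.comp hφ) μ :=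
  ⟨fun k => hf.1 (φ k), fun _ _ hkl => hf.2.1 _ _ (hφ hkl), fun k => hf.2.2 (φ k)⟩

theorem Submartingale.exists_ae_le_condExp_of_uniformIntegrable [Preorder ι] [IsFiniteMeasure μ]
    {ℱ : Filtration ι m₀} {f : ι → Ω → ℝ} (hf : Submartingale f ℱ μ)
    (hunif : UniformIntegrable f 1 μ) {φ : ℕ → ι} (hφ : Monotone φ)
    (hφ_cofinal : ∀ i, ∃ n, i ≤ φ n) :
    ∃ ξ : Ω → ℝ, Integrable ξ μ ∧ ∀ i, f i ≤ᵐ[μ] μ[ξ | ℱ i] := by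
  have hg := hf.comp hφ
  obtain ⟨R, hR⟩ := (hunif.comp φ).2.2
  have hξ := (hg.memLp_limitProcess hR).integrable le_rfl
  refine ⟨_, hξ, fun i => ?_⟩
  obtain ⟨n₀, hn₀⟩ := hφ_cofinal i
  refine ae_le_of_tendsto_eLpNorm_one (hf.integrable i) integrable_condExp ?_
    (tendsto_eLpNorm_one_condExp_sub (fun n => hf.integrable (φ n)) hξ
      (hg.tendsto_eLpNorm_one_limitProcess (hunif.comp φ)))
  filter_upwards [eventually_ge_atTop n₀] with n hn
  exact ⟨integrable_condExp, hf.2.1 i (φ n) (hn₀.trans (hφ hn))⟩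

end MeasureTheory

theorem closed_supermartingale_iff_neg_parts_ui_general {Ω : Type*}
    {mΩ : MeasurableSpace Ω} (P : Measure Ω) [IsProbabilityMeasure P]
    (F : Filtration ℝ≥0 mΩ) (Y : ℝ≥0 → Ω → ℝ)
    (hY : Supermartingale Y F P) :
    (∃ M : ℝ≥0 → Ω → ℝ, Martingale M F P ∧ UniformIntegrable M 1 P ∧
        ∀ t, M t ≤ᵐ[P] Y t) ↔
      UniformIntegrable (fun t : ℝ≥0 => fun ω => max (-(Y t ω)) 0) 1 P := by
  have hneg : Submartingale (fun t : ℝ≥0 => fun ω => max (-(Y t ω)) 0) F P := hY.neg.pos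
  constructor
  · rintro ⟨M, -, hM, hMY⟩
    refine hM.of_ae_norm_le
      (fun t => ((hneg.stronglyMeasurable t).mono (F.le t)).aestronglyMeasurable)
      fun t => (hMY t).mono fun ω hω => ?_
    rw [Real.norm_of_nonneg (le_max_right _ _)]
    exact max_le ((neg_le_neg hω).trans (neg_le_abs _)) (norm_nonneg _)
  · intro hunif
    obtain ⟨ξ, hξ, hle⟩ :=
      hneg.exists_ae_le_condExp_of_uniformIntegrable hunif Nat.mono_cast exists_nat_ge
    refine ⟨fun t => P[-ξ | F t], martingale_condExp _ F P,
      hξ.neg.uniformIntegrable_condExp_filtration, fun t => ?_⟩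
    filter_upwards [hle t, condExp_neg ξ (F t)] with ω hω hξω
    rw [hξω, Pi.neg_apply, neg_le]
    exact (le_max_left _ _).trans hω

/-- a càdlàg supermartingale `(Y_t)_{t ≥ 0}` is closed (i.e.
bounded from below by a uniformly integrable martingale) if and only if the
family of negative parts `(Y_t⁻)_{t ≥ 0}` is uniformly integrable. -/
theorem closed_supermartingale_iff_neg_parts_ui {Ω : Type*}
    {mΩ : MeasurableSpace Ω} (P : Measure Ω) [IsProbabilityMeasure P]
    (F : Filtration ℝ≥0 mΩ) (Y : ℝ≥0 → Ω → ℝ)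
    (hY : Supermartingale Y F P)
    (hrc : ∀ ω, ∀ t : ℝ≥0,
      ContinuousWithinAt (fun s : ℝ≥0 => Y s ω) (Set.Ici t) t) :
    (∃ M : ℝ≥0 → Ω → ℝ, Martingale M F P ∧ UniformIntegrable M 1 P ∧
        ∀ t, M t ≤ᵐ[P] Y t) ↔
      UniformIntegrable (fun t : ℝ≥0 => fun ω => max (-(Y t ω)) 0) 1 P :=
  closed_supermartingale_iff_neg_parts_ui_general P F Y hY
end

section
/- Let $X = (X_t)_{t \ge 0}$ be an adapted c\`adl\`ag real-valued process and $\tau$ a stopping time such that: (a) the stopped process $X^\tau = (X_{t\wedge\tau})$ is a closed supermartingale (bounded below by a uniformly integrable martingale); (b) almost surely $X$ has no intervals of constancy on $[0, \tau)$. Suppose $\sigma \le \tau$ is a stopping time with $X_\sigma$ having the same distribution as $X_\tau$. Then $\sigma = \tau$ almost surely. -/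
/-!
Put `Y t := X (t ∧ τ)`: a supermartingale indexed by `[0, ∞]`, hence closed by `Y ∞ = X_τ`, with
right-continuous paths. Approximating `σ` from above by the dyadic stopping times `σₙ` and letting
`n → ∞` with Fatou's lemma (after truncating `Y` from above) gives optional sampling in the form
`∫_A Y ∞ ≤ ∫_A Y_σ` for `A` in `⋂ₙ F_{σₙ}`, a σ-algebra for which `Y_σ` is measurable. As `Y_σ` and
`Y ∞` have the same law, these inequalities are equalities, and testing them on `A = {Y_σ < b}`
forces `Y ∞ = Y_σ` a.s. Then on `{σ ≤ q}` and for `u > q`, `Y u ≥ E[Y ∞ | F u] = Y_σ` while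
`∫ Y u ≤ ∫ Y_σ`, so `Y u = Y_σ`: the path of `X` is constant between `σ` and `τ`, which the absence
of intervals of constancy only allows when `σ = τ`.
-/

open MeasureTheory ProbabilityTheory Filter
open scoped ENNReal NNReal Topology

noncomputable def dyadicCeil (n : ℕ) (t : ℝ≥0∞) : ℝ≥0∞ :=
  if t = ∞ then ∞ else ((⌈t.toNNReal * 2 ^ n⌉₊ / 2 ^ n : ℝ≥0) : ℝ≥0∞)

section DyadicCeil

variable {n : ℕ}

@[simp] lemma dyadicCeil_top (n : ℕ) : dyadicCeil n ∞ = ∞ := if_pos rfl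

@[simp] lemma dyadicCeil_coe (n : ℕ) (x : ℝ≥0) :
    dyadicCeil n x = ((⌈x * 2 ^ n⌉₊ / 2 ^ n : ℝ≥0) : ℝ≥0∞) := by
  simp [dyadicCeil]

lemma dyadicCeil_le_iff {k : ℕ} {t : ℝ≥0∞} :
    dyadicCeil n t ≤ ((k / 2 ^ n : ℝ≥0) : ℝ≥0∞) ↔ t ≤ ((k / 2 ^ n : ℝ≥0) : ℝ≥0∞) := by
  induction t using ENNReal.recTopCoe with
  | top => simp
  | coe x =>
    rw [dyadicCeil_coe, ENNReal.coe_le_coe, ENNReal.coe_le_coe,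
      div_le_div_iff_of_pos_right (by positivity), Nat.cast_le, Nat.ceil_le,
      le_div_iff₀ (by positivity)]

lemma le_dyadicCeil (n : ℕ) (t : ℝ≥0∞) : t ≤ dyadicCeil n t := by
  induction t using ENNReal.recTopCoe with
  | top => simp
  | coe x => rw [dyadicCeil_coe, ← dyadicCeil_le_iff, dyadicCeil_coe]

lemma dyadicCeil_mono (n : ℕ) : Monotone (dyadicCeil n) := by
  intro s t hst
  induction t using ENNReal.recTopCoe with
  | top => simp
  | coe x =>
    rw [dyadicCeil_coe, dyadicCeil_le_iff, ← dyadicCeil_coe]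
    exact hst.trans (le_dyadicCeil n x)

lemma dyadicCeil_succ_le (n : ℕ) (t : ℝ≥0∞) : dyadicCeil (n + 1) t ≤ dyadicCeil n t := by
  induction t using ENNReal.recTopCoe with
  | top => simp
  | coe x =>
    have h : (⌈x * 2 ^ n⌉₊ / 2 ^ n : ℝ≥0) = ((2 * ⌈x * 2 ^ n⌉₊ : ℕ) : ℝ≥0) / 2 ^ (n + 1) := by
      push_cast
      field_simp
      ring
    rw [dyadicCeil_coe n, h, dyadicCeil_le_iff, ← h, ← dyadicCeil_coe]
    exact le_dyadicCeil n x

lemma antitone_dyadicCeil (t : ℝ≥0∞) : Antitone fun n => dyadicCeil n t :=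
  antitone_nat_of_succ_le (dyadicCeil_succ_le · t)

lemma tendsto_dyadicCeil_coe (x : ℝ≥0) :
    Tendsto (fun n : ℕ => (⌈x * 2 ^ n⌉₊ / 2 ^ n : ℝ≥0)) atTop (𝓝[≥] x) := by
  have hle : ∀ n : ℕ, x ≤ ⌈x * 2 ^ n⌉₊ / 2 ^ n := fun n =>
    (le_div_iff₀ (by positivity)).2 (Nat.le_ceil _)
  have hlt : ∀ n : ℕ, (⌈x * 2 ^ n⌉₊ / 2 ^ n : ℝ≥0) ≤ x + (2⁻¹) ^ n := fun n => by
    rw [div_le_iff₀ (by positivity), add_mul, ← mul_pow, inv_mul_cancel₀ two_ne_zero, one_pow]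
    exact (Nat.ceil_lt_add_one (by positivity)).le
  have hup : Tendsto (fun n : ℕ => x + (2⁻¹ : ℝ≥0) ^ n) atTop (𝓝 x) := by
    simpa using tendsto_const_nhds.add
      (NNReal.tendsto_pow_atTop_nhds_zero_of_lt_one (by norm_num : (2⁻¹ : ℝ≥0) < 1))
  exact tendsto_nhdsWithin_iff.2
    ⟨tendsto_of_tendsto_of_tendsto_of_le_of_le tendsto_const_nhds hup hle hlt,
      Eventually.of_forall hle⟩

lemma eventually_dyadicCeil_lt {t u : ℝ≥0∞} (ht : t ≠ ∞) (htu : t < u) :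
    ∀ᶠ n in atTop, dyadicCeil n t < u := by
  lift t to ℝ≥0 using ht
  simp only [dyadicCeil_coe]
  exact (ENNReal.tendsto_coe.2 ((tendsto_dyadicCeil_coe t).mono_right nhdsWithin_le_nhds))
    |>.eventually_lt_const htu

lemma countable_range_dyadicCeil (n : ℕ) : (Set.range (dyadicCeil n)).Countable := by
  refine ((Set.countable_range fun k : ℕ => ((k / 2 ^ n : ℝ≥0) : ℝ≥0∞)).insert ∞).mono ?_
  rintro _ ⟨t, rfl⟩
  induction t using ENNReal.recTopCoe with
  | top => simp
  | coe x => exact Or.inr ⟨_, (dyadicCeil_coe n x).symm⟩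

lemma finite_image_Iic_dyadicCeil (n : ℕ) (q : ℝ≥0) :
    (dyadicCeil n '' Set.Iic (q : ℝ≥0∞)).Finite := by
  refine ((Set.finite_Iic ⌈q * 2 ^ n⌉₊).image fun k : ℕ => ((k / 2 ^ n : ℝ≥0) : ℝ≥0∞)).subset ?_
  rintro _ ⟨t, ht, rfl⟩
  lift t to ℝ≥0 using ne_top_of_le_ne_top ENNReal.coe_ne_top ht
  refine ⟨_, Nat.ceil_mono ?_, (dyadicCeil_coe n t).symm⟩
  gcongr
  exact ENNReal.coe_le_coe.1 ht

lemma dyadicCeil_le_coe_iff {t : ℝ≥0∞} {y : ℝ≥0} :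
    dyadicCeil n t ≤ y ↔
      ∃ k : ℕ, ((k / 2 ^ n : ℝ≥0) : ℝ≥0∞) ≤ y ∧ t ≤ ((k / 2 ^ n : ℝ≥0) : ℝ≥0∞) := by
  refine ⟨fun h => ?_, fun ⟨k, hky, htk⟩ => (dyadicCeil_le_iff.2 htk).trans hky⟩
  lift t to ℝ≥0 using ne_top_of_le_ne_top ENNReal.coe_ne_top ((le_dyadicCeil n t).trans h)
  exact ⟨_, (dyadicCeil_coe n t) ▸ h, (dyadicCeil_coe n t) ▸ le_dyadicCeil n t⟩

end DyadicCeil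

section StoppingTime

variable {Ω : Type*} {mΩ : MeasurableSpace Ω}

lemma isStoppingTime_dyadicCeil {F : Filtration ℝ≥0∞ mΩ} {σ : Ω → ℝ≥0∞}
    (hσ : IsStoppingTime F fun ω => (σ ω : WithTop ℝ≥0∞)) (n : ℕ) :
    IsStoppingTime F fun ω => (dyadicCeil n (σ ω) : WithTop ℝ≥0∞) := by
  intro i
  simp only [WithTop.coe_le_coe]
  induction i using ENNReal.recTopCoe with
  | top => simp
  | coe y =>
    have : {ω | dyadicCeil n (σ ω) ≤ y} = ⋃ (k : ℕ) (_ : ((k / 2 ^ n : ℝ≥0) : ℝ≥0∞) ≤ y),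
        {ω | σ ω ≤ ((k / 2 ^ n : ℝ≥0) : ℝ≥0∞)} := by
      ext
      simp only [Set.mem_ofPred_eq, Set.mem_iUnion, dyadicCeil_le_coe_iff, exists_prop]
    rw [this]
    exact .iUnion fun k => .iUnion fun hk =>
      F.mono hk _ (by simpa only [WithTop.coe_le_coe] using hσ _)

theorem measurable_stoppedValue_of_countable_range {ι β : Type*} [LinearOrder ι] [Nonempty ι]
    [TopologicalSpace β] [TopologicalSpace.PseudoMetrizableSpace β] [MeasurableSpace β]
    [BorelSpace β]
    {f : Filtration ι mΩ} {u : ι → Ω → β} {τ : Ω → WithTop ι}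
    (hu : StronglyAdapted f u) (hτ : IsStoppingTime f τ) (hc : (Set.range τ).Countable)
    (hτ_top : ∀ ω, τ ω ≠ ⊤) :
    Measurable[hτ.measurableSpace] (stoppedValue u τ) := by
  intro B hB
  have hsplit : stoppedValue u τ ⁻¹' B
      = ⋃ j ∈ Set.range τ, stoppedValue u τ ⁻¹' B ∩ {ω | τ ω = j} := by
    ext ω
    simp
  rw [hsplit]
  refine .biUnion hc ?_
  rintro _ ⟨ω₀, rfl⟩
  obtain ⟨i, hi⟩ := WithTop.ne_top_iff_exists.1 (hτ_top ω₀)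
  have hpiece : stoppedValue u τ ⁻¹' B ∩ {ω | τ ω = i} = u i ⁻¹' B ∩ {ω | τ ω = i} := by
    ext ω
    simp +contextual [stoppedValue]
  rw [← hi, hpiece, hτ.measurableSet_inter_eq_iff]
  exact ((hu i).measurable hB).inter (hτ.measurableSet_eq_of_countable_range hc i)

end StoppingTime

section RightContinuous

variable {β : Type*} [TopologicalSpace β] {f : ℝ≥0∞ → β}

lemma tendsto_dyadicCeil_of_continuousWithinAt
    (hf : ∀ x : ℝ≥0, ContinuousWithinAt (fun s : ℝ≥0 => f s) (Set.Ici x) x) (t : ℝ≥0∞) :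
    Tendsto (fun n => f (dyadicCeil n t)) atTop (𝓝 (f t)) := by
  induction t using ENNReal.recTopCoe with
  | top => simpa using tendsto_const_nhds
  | coe x =>
    simp only [dyadicCeil_coe]
    exact (hf x).tendsto.comp (tendsto_dyadicCeil_coe x)

lemma continuousWithinAt_min_coe
    (hf : ∀ x : ℝ≥0, ContinuousWithinAt (fun s : ℝ≥0 => f s) (Set.Ici x) x) (T : ℝ≥0∞)
    (x : ℝ≥0) : ContinuousWithinAt (fun s : ℝ≥0 => f (min (s : ℝ≥0∞) T)) (Set.Ici x) x := by
  rcases lt_or_ge (x : ℝ≥0∞) T with h | h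
  · have hT : ∀ᶠ s : ℝ≥0 in 𝓝 x, (s : ℝ≥0∞) < T :=
      (ENNReal.continuous_coe.tendsto x).eventually_lt_const h
    refine (hf x).congr_of_eventuallyEq ?_ (by simp [h.le])
    filter_upwards [nhdsWithin_le_nhds hT] with s hs
    simp [hs.le]
  · have hconst : ContinuousWithinAt (fun _ : ℝ≥0 => f T) (Set.Ici x) x :=
      continuousWithinAt_const
    refine hconst.congr (fun s hs => ?_) (by simp [h])
    simp [h.trans (ENNReal.coe_le_coe.2 hs)]

end RightContinuous

section StoppedValue

variable {Ω : Type*} {mΩ : MeasurableSpace Ω} {F : Filtration ℝ≥0∞ mΩ} {Y : ℝ≥0∞ → Ω → ℝ}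
  {σ : Ω → ℝ≥0∞}

lemma measurableSet_le_dyadicCeil (hσ : IsStoppingTime F fun ω => (σ ω : WithTop ℝ≥0∞))
    (n : ℕ) (t : ℝ≥0∞) :
    MeasurableSet[(isStoppingTime_dyadicCeil hσ n).measurableSpace] {ω | σ ω ≤ t} :=
  IsStoppingTime.measurableSpace_mono hσ _
    (fun ω => WithTop.coe_le_coe.2 (le_dyadicCeil n (σ ω))) _
    (by simpa only [WithTop.coe_le_coe] using hσ.measurableSet_le' t)

lemma measurable_stoppedValue_dyadicCeil (hY : StronglyAdapted F Y)
    (hσ : IsStoppingTime F fun ω => (σ ω : WithTop ℝ≥0∞)) (n : ℕ) :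
    Measurable[(isStoppingTime_dyadicCeil hσ n).measurableSpace]
      fun ω => Y (dyadicCeil n (σ ω)) ω := by
  refine measurable_stoppedValue_of_countable_range hY (isStoppingTime_dyadicCeil hσ n) ?_
    fun _ => WithTop.coe_ne_top
  refine ((countable_range_dyadicCeil n).image (↑)).mono ?_
  rintro _ ⟨ω, rfl⟩
  exact ⟨_, ⟨σ ω, rfl⟩, rfl⟩

lemma measurable_stoppedValue_of_continuousWithinAt (hY : StronglyAdapted F Y)
    (hrc : ∀ ω (x : ℝ≥0), ContinuousWithinAt (fun s : ℝ≥0 => Y s ω) (Set.Ici x) x)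
    (hσ : IsStoppingTime F fun ω => (σ ω : WithTop ℝ≥0∞)) (n : ℕ) :
    Measurable[(isStoppingTime_dyadicCeil hσ n).measurableSpace] fun ω => Y (σ ω) ω := by
  refine @measurable_of_tendsto_metrizable Ω ℝ (isStoppingTime_dyadicCeil hσ n).measurableSpace
    _ _ _ _ (fun m ω => Y (dyadicCeil (m + n) (σ ω)) ω) _ (fun m => ?_) ?_
  · refine (measurable_stoppedValue_dyadicCeil hY hσ (m + n)).mono
      (IsStoppingTime.measurableSpace_mono _ _ fun ω => ?_) le_rfl
    exact WithTop.coe_le_coe.2 (antitone_dyadicCeil (σ ω) (Nat.le_add_left n m))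
  · exact tendsto_pi_nhds.2 fun ω =>
      (tendsto_dyadicCeil_of_continuousWithinAt (f := (Y · ω)) (hrc ω) (σ ω)).comp
        (tendsto_add_atTop_nat n)

end StoppedValue

lemma MeasureTheory.IsStoppingTime.measurable_indicator {Ω ι β : Type*} {mΩ : MeasurableSpace Ω}
    [Preorder ι] [Zero β] [MeasurableSpace β] {f : Filtration ι mΩ} {τ : Ω → WithTop ι}
    (hτ : IsStoppingTime f τ) {s : Set Ω} {g : Ω → β} {i : ι}
    (hs : MeasurableSet[hτ.measurableSpace] s) (hg : Measurable[hτ.measurableSpace] g)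
    (hsi : s ⊆ {ω | τ ω ≤ i}) : Measurable[f i] (s.indicator g) := by
  intro B hB
  have hoff : s.indicator g ⁻¹' B ∩ {ω | τ ω ≤ i}ᶜ = (fun _ => (0 : β)) ⁻¹' B ∩ {ω | τ ω ≤ i}ᶜ := by
    ext ω
    by_cases hω : τ ω ≤ i
    · simp [hω]
    · simp [hω, Set.indicator_of_notMem fun h => hω (hsi h)]
  rw [← Set.inter_union_compl (s.indicator g ⁻¹' B) {ω | τ ω ≤ i}, hoff]
  exact (((hg.indicator hs) hB).2 i).union
    ((measurable_const hB).inter (hτ.measurableSet_le i).compl)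

lemma biUnion_inter_setOf_eq {Ω ι : Type*} {τ : Ω → WithTop ι} {s : Finset ι} {B : Set Ω}
    (h : ∀ ω ∈ B, ∃ i ∈ s, τ ω = i) : ⋃ i ∈ s, B ∩ {ω | τ ω = i} = B := by
  ext ω
  simp only [Set.mem_iUnion, Set.mem_inter_iff, Set.mem_ofPred_eq, exists_prop]
  exact ⟨fun ⟨_, _, hω, _⟩ => hω, fun hω => (h ω hω).imp fun i hi => ⟨hi.1, hω, hi.2⟩⟩

section FiniteSampling

variable {Ω ι : Type*} {mΩ : MeasurableSpace Ω} [LinearOrder ι] [TopologicalSpace ι]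
  [OrderTopology ι] [FirstCountableTopology ι] {f : Filtration ι mΩ} {μ : Measure Ω}
  {Y : ι → Ω → ℝ} {τ : Ω → WithTop ι} {s : Finset ι} {B : Set Ω}

lemma MeasureTheory.IsStoppingTime.measurableSet_inter_eq_of_measurableSet (hτ : IsStoppingTime f τ)
    (hB : MeasurableSet[hτ.measurableSpace] B) (i : ι) :
    MeasurableSet[f i] (B ∩ {ω | τ ω = i}) :=
  (hτ.measurableSet_inter_eq_iff B i).1 (hB.inter (hτ.measurableSet_eq' i))

lemma integrableOn_stoppedValue_of_forall_exists_eq [Nonempty ι] (hY : ∀ i, Integrable (Y i) μ)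
    (hτ : IsStoppingTime f τ) (hB : MeasurableSet[hτ.measurableSpace] B)
    (hτs : ∀ ω ∈ B, ∃ i ∈ s, τ ω = i) : IntegrableOn (stoppedValue Y τ) B μ := by
  rw [← biUnion_inter_setOf_eq hτs, integrableOn_finset_iUnion]
  refine fun i _ => (hY i).integrableOn.congr_fun (fun ω hω => ?_)
    (f.le i _ (hτ.measurableSet_inter_eq_of_measurableSet hB i))
  rw [stoppedValue, show τ ω = i from hω.2]
  rfl

theorem MeasureTheory.Supermartingale.setIntegral_le_setIntegral_stoppedValue
    [Nonempty ι] [SigmaFiniteFiltration μ f] (hY : Supermartingale Y f μ) (hτ : IsStoppingTime f τ)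
    (hB : MeasurableSet[hτ.measurableSpace] B) (hτs : ∀ ω ∈ B, ∃ i ∈ s, τ ω = i) {u : ι}
    (hsu : ∀ i ∈ s, i ≤ u) :
    ∫ ω in B, Y u ω ∂μ ≤ ∫ ω in B, stoppedValue Y τ ω ∂μ := by
  have hpiece := hτ.measurableSet_inter_eq_of_measurableSet hB
  have hpiece' : ∀ i ∈ s, MeasurableSet (B ∩ {ω | τ ω = i}) := fun i _ => f.le i _ (hpiece i)
  have hdisj : (s : Set ι).Pairwise (Function.onFun Disjoint fun i => B ∩ {ω | τ ω = i}) :=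
    fun i _ j _ hij => Set.disjoint_left.2 fun ω hi hj =>
      hij (WithTop.coe_injective (hi.2.symm.trans hj.2))
  have hint := integrableOn_stoppedValue_of_forall_exists_eq hY.integrable hτ hB hτs
  rw [← biUnion_inter_setOf_eq hτs, integral_biUnion_finset s hpiece' hdisj
      fun i _ => (hY.integrable u).integrableOn,
    integral_biUnion_finset s hpiece' hdisj fun i _ => hint.mono_set Set.inter_subset_left]
  refine Finset.sum_le_sum fun i hi => ?_
  refine (hY.setIntegral_le (hsu i hi) (hpiece i)).trans_eq
    (setIntegral_congr_fun (hpiece' i hi) fun ω hω => ?_)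
  rw [stoppedValue, show τ ω = i from hω.2]
  rfl

end FiniteSampling

lemma le_integral_of_tendsto_of_le_const {α : Type*} {mα : MeasurableSpace α} {μ : Measure α}
    [IsFiniteMeasure μ] {f : ℕ → α → ℝ} {g : α → ℝ} {a c : ℝ} (hf : ∀ n, Integrable (f n) μ)
    (hg : Integrable g μ) (hfc : ∀ n, ∀ᵐ x ∂μ, f n x ≤ c)
    (hfg : ∀ᵐ x ∂μ, Tendsto (fun n => f n x) atTop (𝓝 (g x))) (ha : ∀ n, a ≤ ∫ x, f n x ∂μ) :
    a ≤ ∫ x, g x ∂μ := by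
  have hgc : ∀ᵐ x ∂μ, g x ≤ c := by
    filter_upwards [hfg, ae_all_iff.2 hfc] with x hx hxc
    exact le_of_tendsto' hx hxc
  have hfc' : ∀ n, 0 ≤ᵐ[μ] fun x => c - f n x := fun n => (hfc n).mono fun x hx => sub_nonneg.2 hx
  have hgc' : 0 ≤ᵐ[μ] fun x => c - g x := hgc.mono fun x hx => sub_nonneg.2 hx
  have hbound : ∀ n, ∫ x, c - f n x ∂μ ≤ μ.real Set.univ * c - a := fun n => by
    rw [integral_sub (integrable_const c) (hf n), integral_const, smul_eq_mul]
    linarith [ha n]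
  -- Fatou's lemma for the nonnegative functions `c - f n`
  have hfatou : ENNReal.ofReal (∫ x, c - g x ∂μ) ≤ ENNReal.ofReal (μ.real Set.univ * c - a) := by
    rw [ofReal_integral_eq_lintegral_ofReal (f := fun x => c - g x)
      ((integrable_const c).sub hg) hgc']
    calc ∫⁻ x, ENNReal.ofReal (c - g x) ∂μ
        = ∫⁻ x, liminf (fun n => ENNReal.ofReal (c - f n x)) atTop ∂μ := by
          refine lintegral_congr_ae ?_
          filter_upwards [hfg] with x hx
          exact ((ENNReal.continuous_ofReal.tendsto _).comp
            (tendsto_const_nhds.sub hx)).liminf_eq.symm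
      _ ≤ liminf (fun n => ∫⁻ x, ENNReal.ofReal (c - f n x) ∂μ) atTop :=
          lintegral_liminf_le' fun n =>
            ((integrable_const c).sub (hf n)).aemeasurable.ennreal_ofReal
      _ ≤ ENNReal.ofReal (μ.real Set.univ * c - a) := by
          refine liminf_le_of_frequently_le' (Frequently.of_forall fun n => ?_)
          rw [← ofReal_integral_eq_lintegral_ofReal (f := fun x => c - f n x)
            ((integrable_const c).sub (hf n)) (hfc' n)]
          exact ENNReal.ofReal_le_ofReal (hbound n)
  have hnonneg : 0 ≤ μ.real Set.univ * c - a :=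
    (integral_nonneg_of_ae (hfc' 0)).trans (hbound 0)
  rw [ENNReal.ofReal_le_ofReal_iff hnonneg, integral_sub (integrable_const c) hg,
    integral_const, smul_eq_mul] at hfatou
  linarith

lemma ae_le_of_setIntegral_min_eq {α : Type*} {mα : MeasurableSpace α} {μ : Measure α}
    [IsFiniteMeasure μ] {S Z : α → ℝ} (hS : Measurable S) (hZ : Integrable Z μ)
    (h : ∀ b c : ℝ, ∫ x in {x | S x < b}, min (Z x) c ∂μ = ∫ x in {x | S x < b}, min (S x) c ∂μ) :
    Z ≤ᵐ[μ] S := by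
  have hb : ∀ b : ℚ, ∀ᵐ x ∂μ, S x < b → Z x ≤ b := by
    intro b
    have hA : MeasurableSet {x | S x < b} := measurableSet_lt hS measurable_const
    -- on `{S < b}` the truncations of `S` at `b` and at `b + 1` agree, hence so do those of `Z`
    have heq : ∫ x in {x | S x < b}, min (Z x) b ∂μ
        = ∫ x in {x | S x < b}, min (Z x) (b + 1) ∂μ := by
      rw [h, h]
      refine setIntegral_congr_fun hA fun x (hx : S x < b) => ?_
      rw [min_eq_left hx.le, min_eq_left (by linarith)]
    have hae := (integral_eq_iff_of_ae_le (hZ.inf (integrable_const _)).integrableOn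
      (hZ.inf (integrable_const _)).integrableOn
      (ae_of_all _ fun x => min_le_min_left _ (by linarith))).1 heq
    filter_upwards [(ae_restrict_iff' hA).1 hae] with x hx hxb
    by_contra hlt
    have h1 : min (Z x) b = b := min_eq_right (not_le.1 hlt).le
    have h2 : (b : ℝ) < min (Z x) (b + 1) := lt_min (not_le.1 hlt) (by linarith)
    have h3 : min (Z x) b = min (Z x) (b + 1) := hx hxb
    linarith
  filter_upwards [ae_all_iff.2 hb] with x hx
  by_contra hlt
  obtain ⟨b, hSb, hbZ⟩ := exists_rat_btwn (not_le.1 hlt)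
  exact (hx b hSb).not_gt hbZ

namespace MeasureTheory.Supermartingale

variable {Ω : Type*} {mΩ : MeasurableSpace Ω} {P : Measure Ω} [IsFiniteMeasure P]
  {F : Filtration ℝ≥0∞ mΩ} {Y : ℝ≥0∞ → Ω → ℝ} {σ : Ω → ℝ≥0∞}

lemma min_const (hY : Supermartingale Y F P) (c : ℝ) :
    Supermartingale (fun t ω => min (Y t ω) c) F P := by
  have h := (hY.neg.sup (martingale_const F P (-c)).submartingale).neg
  have e : -(-Y ⊔ fun _ _ => -c) = fun t ω => min (Y t ω) c := by
    funext t ω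
    simp only [Pi.neg_apply, Pi.sup_apply, max_neg_neg, neg_neg]
  rwa [e] at h

variable (hY : Supermartingale Y F P)
  (hrc : ∀ ω (x : ℝ≥0), ContinuousWithinAt (fun s : ℝ≥0 => Y s ω) (Set.Ici x) x)
  (hσ : IsStoppingTime F fun ω => (σ ω : WithTop ℝ≥0∞))
include hY hrc hσ

theorem setIntegral_le_setIntegral_stoppedValue_of_le_const {c : ℝ} (hYc : ∀ t ω, Y t ω ≤ c)
    (hYσ : Integrable (fun ω => Y (σ ω) ω) P) {A : Set Ω}
    (hA : ∀ n, MeasurableSet[(isStoppingTime_dyadicCeil hσ n).measurableSpace] A)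
    {q : ℝ≥0} {u : ℝ≥0∞} (hqu : (q : ℝ≥0∞) < u) :
    ∫ ω in A ∩ {ω | σ ω ≤ q}, Y u ω ∂P ≤ ∫ ω in A ∩ {ω | σ ω ≤ q}, Y (σ ω) ω ∂P := by
  set B := A ∩ {ω | σ ω ≤ q}
  obtain ⟨N, hN⟩ := (eventually_dyadicCeil_lt ENNReal.coe_ne_top hqu).exists_forall_of_atTop
  have hBn : ∀ n, MeasurableSet[(isStoppingTime_dyadicCeil hσ n).measurableSpace] B :=
    fun n => (hA n).inter (measurableSet_le_dyadicCeil hσ n q)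
  have hfin := fun n => finite_image_Iic_dyadicCeil n q
  have hvals : ∀ n, ∀ ω ∈ B, ∃ i ∈ (hfin n).toFinset, (dyadicCeil n (σ ω) : WithTop ℝ≥0∞) = i :=
    fun n ω hω => ⟨_, (hfin n).mem_toFinset.2 ⟨σ ω, hω.2, rfl⟩, rfl⟩
  have hsample : ∀ n ≥ N, ∫ ω in B, Y u ω ∂P ≤ ∫ ω in B, Y (dyadicCeil n (σ ω)) ω ∂P :=
    fun n hn => hY.setIntegral_le_setIntegral_stoppedValue (isStoppingTime_dyadicCeil hσ n)
      (hBn n) (hvals n) fun i hi => by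
        obtain ⟨t, ht, rfl⟩ := (hfin n).mem_toFinset.1 hi
        exact (dyadicCeil_mono n ht).trans (hN n hn).le
  refine le_integral_of_tendsto_of_le_const (μ := P.restrict B) (c := c)
    (f := fun m ω => Y (dyadicCeil (m + N) (σ ω)) ω) (fun m => ?_) hYσ.integrableOn
    (fun m => ae_of_all _ fun ω => hYc _ _) (ae_of_all _ fun ω => ?_)
    (fun m => hsample (m + N) (Nat.le_add_left N m))
  · exact integrableOn_stoppedValue_of_forall_exists_eq hY.integrable
      (isStoppingTime_dyadicCeil hσ (m + N)) (hBn _) (hvals _)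
  · exact (tendsto_dyadicCeil_of_continuousWithinAt (f := (Y · ω)) (hrc ω) (σ ω)).comp
      (tendsto_add_atTop_nat N)

theorem setIntegral_top_le_setIntegral_stoppedValue_of_le_const {c : ℝ} (hYc : ∀ t ω, Y t ω ≤ c)
    (hYσ : Integrable (fun ω => Y (σ ω) ω) P) {A : Set Ω}
    (hA : ∀ n, MeasurableSet[(isStoppingTime_dyadicCeil hσ n).measurableSpace] A) :
    ∫ ω in A, Y ∞ ω ∂P ≤ ∫ ω in A, Y (σ ω) ω ∂P := by
  have hAm : MeasurableSet A := IsStoppingTime.measurableSpace_le _ _ (hA 0)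
  have hle : ∀ j : ℕ, MeasurableSet {ω | σ ω ≤ ((j : ℝ≥0) : ℝ≥0∞)} := fun j =>
    F.le _ _ (by simpa only [WithTop.coe_le_coe] using hσ _)
  set T := ⋃ j : ℕ, {ω | σ ω ≤ ((j : ℝ≥0) : ℝ≥0∞)}
  have hT : MeasurableSet T := .iUnion hle
  have hlim : ∀ g : Ω → ℝ, Integrable g P → Tendsto
      (fun j : ℕ => ∫ ω in A ∩ {ω | σ ω ≤ ((j : ℝ≥0) : ℝ≥0∞)}, g ω ∂P) atTop
      (𝓝 (∫ ω in A ∩ T, g ω ∂P)) := fun g hg => by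
    rw [Set.inter_iUnion]
    refine tendsto_setIntegral_of_monotone (fun j => hAm.inter (hle j))
      (fun i j hij => Set.inter_subset_inter_right _ fun ω hω => ?_) hg.integrableOn
    exact le_trans (show σ ω ≤ ((i : ℝ≥0) : ℝ≥0∞) from hω) (by exact_mod_cast hij)
  have hfinite : ∫ ω in A ∩ T, Y ∞ ω ∂P ≤ ∫ ω in A ∩ T, Y (σ ω) ω ∂P :=
    le_of_tendsto_of_tendsto' (hlim _ (hY.integrable ∞)) (hlim _ hYσ) fun j =>
      hY.setIntegral_le_setIntegral_stoppedValue_of_le_const hrc hσ hYc hYσ hA ENNReal.coe_lt_top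
  have hinfinite : ∫ ω in A \ T, Y ∞ ω ∂P = ∫ ω in A \ T, Y (σ ω) ω ∂P := by
    refine setIntegral_congr_fun (hAm.diff hT) fun ω hω => ?_
    have : σ ω = ∞ := by
      by_contra h
      obtain ⟨j, hj⟩ := ENNReal.exists_nat_gt h
      exact hω.2 (Set.mem_iUnion.2 ⟨j, by simpa using hj.le⟩)
    simp [this]
  rw [← integral_inter_add_sdiff hT (hY.integrable ∞).integrableOn,
    ← integral_inter_add_sdiff hT hYσ.integrableOn, hinfinite]
  linarith

theorem setIntegral_min_top_eq_of_integral_min_eq (hYσ : Integrable (fun ω => Y (σ ω) ω) P)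
    {c : ℝ} (htotal : ∫ ω, min (Y (σ ω) ω) c ∂P = ∫ ω, min (Y ∞ ω) c ∂P) {A : Set Ω}
    (hA : ∀ n, MeasurableSet[(isStoppingTime_dyadicCeil hσ n).measurableSpace] A) :
    ∫ ω in A, min (Y ∞ ω) c ∂P = ∫ ω in A, min (Y (σ ω) ω) c ∂P := by
  have hYc := hY.min_const c
  have hrcc : ∀ ω (x : ℝ≥0), ContinuousWithinAt (fun s : ℝ≥0 => min (Y s ω) c) (Set.Ici x) x :=
    fun ω x => (hrc ω x).min continuousWithinAt_const
  have hYσc : Integrable (fun ω => min (Y (σ ω) ω) c) P := hYσ.inf (integrable_const c)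
  have hA_le := hYc.setIntegral_top_le_setIntegral_stoppedValue_of_le_const hrcc hσ
    (fun _ _ => min_le_right _ _) hYσc hA
  have hAc_le := hYc.setIntegral_top_le_setIntegral_stoppedValue_of_le_const hrcc hσ
    (fun _ _ => min_le_right _ _) hYσc fun n => (hA n).compl
  have hAm : MeasurableSet A := IsStoppingTime.measurableSpace_le _ _ (hA 0)
  rw [← integral_add_compl hAm hYσc, ← integral_add_compl hAm (hYc.integrable ∞)] at htotal
  linarith

theorem stoppedValue_ae_eq_of_map_eq
    (hlaw : P.map (fun ω => Y (σ ω) ω) = P.map (Y ∞)) : (fun ω => Y (σ ω) ω) =ᵐ[P] Y ∞ := by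
  set S := fun ω => Y (σ ω) ω
  have hSm := measurable_stoppedValue_of_continuousWithinAt hY.stronglyAdapted hrc hσ
  have hS : Measurable S := (hSm 0).mono (IsStoppingTime.measurableSpace_le _) le_rfl
  have hZ : Measurable (Y ∞) := (hY.stronglyMeasurable ∞).measurable.mono (F.le ∞) le_rfl
  have hintegral : ∀ φ : ℝ → ℝ, Continuous φ → ∫ ω, φ (S ω) ∂P = ∫ ω, φ (Y ∞ ω) ∂P :=
    fun φ hφ => by
      rw [← integral_map hS.aemeasurable hφ.aestronglyMeasurable, hlaw,
        integral_map hZ.aemeasurable hφ.aestronglyMeasurable]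
  have hSint : Integrable S P := by
    rw [← Function.id_comp S, ← integrable_map_measure aestronglyMeasurable_id hS.aemeasurable,
      hlaw, integrable_map_measure aestronglyMeasurable_id hZ.aemeasurable]
    exact hY.integrable ∞
  have hZS : Y ∞ ≤ᵐ[P] S := ae_le_of_setIntegral_min_eq hS (hY.integrable ∞) fun b c =>
    hY.setIntegral_min_top_eq_of_integral_min_eq hrc hσ hSint
      (hintegral (min · c) (continuous_id.min continuous_const))
      fun n => measurableSet_lt (hSm n) measurable_const
  exact ((integral_eq_iff_of_ae_le (hY.integrable ∞) hSint hZS).1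
    (hintegral id continuous_id).symm).symm

theorem ae_eq_stoppedValue_of_le_const {c : ℝ} (hYc : ∀ t ω, Y t ω ≤ c)
    (hYσ : Integrable (fun ω => Y (σ ω) ω) P) (hσY : (fun ω => Y (σ ω) ω) =ᵐ[P] Y ∞)
    {q : ℝ≥0} {u : ℝ≥0∞} (hqu : (q : ℝ≥0∞) < u) :
    ∀ᵐ ω ∂P, σ ω ≤ q → Y u ω = Y (σ ω) ω := by
  set S := fun ω => Y (σ ω) ω
  set B := {ω | σ ω ≤ q}
  have hBu : MeasurableSet[F u] B := F.mono hqu.le _ (by simpa only [WithTop.coe_le_coe] using hσ q)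
  have hB : MeasurableSet B := F.le u _ hBu
  obtain ⟨n, hn⟩ := (eventually_dyadicCeil_lt ENNReal.coe_ne_top hqu).exists
  have hW : StronglyMeasurable[F u] (B.indicator S) := by
    refine (IsStoppingTime.measurable_indicator (isStoppingTime_dyadicCeil hσ n) ?_
      (measurable_stoppedValue_of_continuousWithinAt hY.stronglyAdapted hrc hσ n)
      fun ω (hω : σ ω ≤ q) => WithTop.coe_le_coe.2 ((dyadicCeil_mono n hω).trans hn.le))
      |>.stronglyMeasurable
    exact measurableSet_le_dyadicCeil hσ n q
  have hcond : B.indicator (P[Y ∞ | F u]) =ᵐ[P] B.indicator S :=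
    calc B.indicator (P[Y ∞ | F u])
        =ᵐ[P] P[B.indicator (Y ∞) | F u] := (condExp_indicator (hY.integrable ∞) hBu).symm
      _ =ᵐ[P] P[B.indicator S | F u] := condExp_congr_ae hσY.symm.indicator
      _ = B.indicator S := condExp_of_stronglyMeasurable (F.le u) hW (hYσ.indicator hB)
  have hSle : ∀ᵐ ω ∂P.restrict B, S ω ≤ Y u ω := by
    rw [ae_restrict_iff' hB]
    filter_upwards [hcond, hY.condExp_ae_le (le_top : u ≤ ∞)] with ω h1 h2 hω
    rw [Set.indicator_of_mem hω, Set.indicator_of_mem hω] at h1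
    exact h1 ▸ h2
  have hint := hY.setIntegral_le_setIntegral_stoppedValue_of_le_const hrc hσ hYc hYσ
    (A := Set.univ) (fun _ => MeasurableSet.univ) hqu
  rw [Set.univ_inter] at hint
  have heq := (integral_eq_iff_of_ae_le hYσ.integrableOn (hY.integrable u).integrableOn hSle).1
    (le_antisymm
      (setIntegral_mono_ae_restrict hYσ.integrableOn (hY.integrable u).integrableOn hSle) hint)
  exact (ae_restrict_iff' hB).1 (heq.mono fun ω h => h.symm)

theorem ae_eq_stoppedValue_of_map_eq (hlaw : P.map (fun ω => Y (σ ω) ω) = P.map (Y ∞))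
    {q : ℝ≥0} {u : ℝ≥0∞} (hqu : (q : ℝ≥0∞) < u) :
    ∀ᵐ ω ∂P, σ ω ≤ q → Y u ω = Y (σ ω) ω := by
  have hσY := hY.stoppedValue_ae_eq_of_map_eq hrc hσ hlaw
  have hYσ : Integrable (fun ω => Y (σ ω) ω) P := (integrable_congr hσY).2 (hY.integrable ∞)
  have htrunc : ∀ k : ℕ, ∀ᵐ ω ∂P, σ ω ≤ q → min (Y u ω) k = min (Y (σ ω) ω) k := fun k =>
    (hY.min_const k).ae_eq_stoppedValue_of_le_const
      (fun ω x => (hrc ω x).min continuousWithinAt_const) hσ (fun _ _ => min_le_right _ _)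
      (hYσ.inf (integrable_const _)) (hσY.mono fun ω h => by simp only [h]) hqu
  filter_upwards [ae_all_iff.2 htrunc] with ω h hω
  obtain ⟨k, hk⟩ := exists_nat_ge (max (Y u ω) (Y (σ ω) ω))
  simpa [min_eq_left ((le_max_left _ _).trans hk), min_eq_left ((le_max_right _ _).trans hk)]
    using h k hω

end MeasureTheory.Supermartingale

lemma exists_mem_dense_btwn {D : Set ℝ≥0} (hD : Dense D) {a b : ℝ≥0∞} (hab : a < b) :
    ∃ d ∈ D, a < d ∧ (d : ℝ≥0∞) < b := by
  obtain ⟨r, har, hrb⟩ := ENNReal.lt_iff_exists_nnreal_btwn.1 hab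
  obtain ⟨r', hrr', hr'b⟩ := ENNReal.lt_iff_exists_nnreal_btwn.1 hrb
  obtain ⟨d, hdD, hrd, hdr'⟩ := hD.exists_between (ENNReal.coe_lt_coe.1 hrr')
  exact ⟨d, hdD, har.trans (ENNReal.coe_lt_coe.2 hrd), (ENNReal.coe_lt_coe.2 hdr').trans hr'b⟩

lemma eq_of_forall_mem_dense_eq {f : ℝ≥0 → ℝ} (hf : ∀ x, ContinuousWithinAt f (Set.Ici x) x)
    {D : Set ℝ≥0} (hD : Dense D) {a : ℝ≥0} {b : ℝ≥0∞} {y : ℝ}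
    (h : ∀ d ∈ D, a < d → (d : ℝ≥0∞) < b → f d = y) {x : ℝ≥0} (hax : a ≤ x)
    (hxb : (x : ℝ≥0∞) < b) : f x = y := by
  obtain ⟨w, hxw, hwb⟩ := ENNReal.lt_iff_exists_nnreal_btwn.1 hxb
  have hxw' : x < w := ENNReal.coe_lt_coe.1 hxw
  have hx : x ∈ closure (Set.Ioo x w ∩ D) := by
    have : x ∈ closure (Set.Ioo x w) := by
      rw [closure_Ioo hxw'.ne]
      exact ⟨le_rfl, hxw'.le⟩
    simpa only [closure_closure] using closure_mono (hD.open_subset_closure_inter isOpen_Ioo) this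
  have himage : f '' (Set.Ioo x w ∩ D) ⊆ {y} := by
    rintro _ ⟨d, ⟨⟨hxd, hdw⟩, hdD⟩, rfl⟩
    exact h d hdD (hax.trans_lt hxd) ((ENNReal.coe_lt_coe.2 hdw).trans hwb)
  have := closure_mono himage (((hf x).mono fun z hz => hz.1.1.le).mem_closure_image hx)
  simpa using this

theorem minimality_of_closed_supermartingale_stopping_general
    {Ω : Type*} {mΩ : MeasurableSpace Ω} (P : Measure Ω)
    [IsProbabilityMeasure P] (F : Filtration ℝ≥0∞ mΩ) (X : ℝ≥0∞ → Ω → ℝ)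
    -- `X` is adapted with càdlàg (right-continuous) paths:
    (hrc : ∀ ω, ∀ t : ℝ≥0, ContinuousWithinAt
      (fun s : ℝ≥0 => X (s : ℝ≥0∞) ω) (Set.Ici t) t)
    (τ : Ω → ℝ≥0∞)
    -- (a) the stopped process `X^τ` is a supermartingale ...
    (hint : ∀ t : ℝ≥0∞, Integrable (fun ω => X (min t (τ ω)) ω) P)
    (hadpstop : ∀ t : ℝ≥0∞, StronglyMeasurable[F t] fun ω => X (min t (τ ω)) ω)
    (hsmg : ∀ s t : ℝ≥0∞, s ≤ t →
      (P[fun ω => X (min t (τ ω)) ω | F s])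
        ≤ᵐ[P] fun ω => X (min s (τ ω)) ω)
    -- `σ ≤ τ` is a stopping time with `X_σ ~ X_τ`:
    (σ : Ω → ℝ≥0∞) (hσ : IsStoppingTime F (fun ω => (σ ω : WithTop ℝ≥0∞))) (hστ : ∀ ω, σ ω ≤ τ ω)
    (hlaw : Measure.map (fun ω => X (σ ω) ω) P
      = Measure.map (fun ω => X (τ ω) ω) P)
    -- (b) a.s. `X` has no intervals of constancy on `[0, τ)`:
    (hnc : ∀ᵐ ω ∂P, ∀ s t : ℝ≥0, s < t → (t : ℝ≥0∞) < τ ω →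
      ∃ u ∈ Set.Icc s t, X (u : ℝ≥0∞) ω ≠ X (s : ℝ≥0∞) ω) :
    σ =ᵐ[P] τ := by
  set Y : ℝ≥0∞ → Ω → ℝ := fun t ω => X (min t (τ ω)) ω
  have hY : Supermartingale Y F P := ⟨hadpstop, hsmg, hint⟩
  have hYσ : (fun ω => Y (σ ω) ω) = fun ω => X (σ ω) ω := by
    funext ω
    simp [Y, min_eq_left (hστ ω)]
  have hYlaw : P.map (fun ω => Y (σ ω) ω) = P.map (Y ∞) := by
    simpa [hYσ, Y] using hlaw
  obtain ⟨D, hDc, hD⟩ := TopologicalSpace.exists_countable_dense ℝ≥0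
  have hsticks : ∀ᵐ ω ∂P, ∀ q ∈ D, ∀ u ∈ D, q < u → σ ω ≤ q → Y u ω = X (σ ω) ω := by
    refine (ae_ball_iff hDc).2 fun q _ => (ae_ball_iff hDc).2 fun u _ => ?_
    by_cases hqu : q < u
    · filter_upwards [hY.ae_eq_stoppedValue_of_map_eq
        (fun ω => continuousWithinAt_min_coe (f := (X · ω)) (hrc ω) (τ ω)) hσ hYlaw
        (ENNReal.coe_lt_coe.2 hqu)] with ω h _ hσq
      simpa [Y, min_eq_left (hστ ω)] using h hσq
    · exact ae_of_all _ fun ω h => absurd h hqu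
  filter_upwards [hsticks, hnc] with ω hω hncω
  refine le_antisymm (hστ ω) (not_lt.1 fun hlt => ?_)
  obtain ⟨q, hqD, hσq, hqτ⟩ := exists_mem_dense_btwn hD hlt
  obtain ⟨t, -, hqt, htτ⟩ := exists_mem_dense_btwn hD hqτ
  have hconst : ∀ x : ℝ≥0, q ≤ x → (x : ℝ≥0∞) < τ ω → X x ω = X (σ ω) ω :=
    fun x => eq_of_forall_mem_dense_eq (hrc ω) hD fun u hu hqu huτ => by
      simpa [Y, min_eq_left huτ.le] using hω q hqD u hu hqu hσq.le
  obtain ⟨w, hw, hne⟩ := hncω q t (ENNReal.coe_lt_coe.1 hqt) htτ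
  exact hne ((hconst w hw.1 ((ENNReal.coe_le_coe.2 hw.2).trans_lt htτ)).trans
    (hconst q le_rfl hqτ).symm)

/-- sufficient condition for minimality (Theorem 4.2 of the
paper with `g` the identity): if the stopped process `X^τ` is a closed
supermartingale and a.s. `X` has no intervals of constancy on `[0, τ)`,
then any stopping time `σ ≤ τ` with `X_σ ~ X_τ` satisfies `σ = τ` a.s. -/
theorem minimality_of_closed_supermartingale_stopping
    {Ω : Type*} {mΩ : MeasurableSpace Ω} (P : Measure Ω)
    [IsProbabilityMeasure P] (F : Filtration ℝ≥0∞ mΩ) (X : ℝ≥0∞ → Ω → ℝ)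
    -- `X` is adapted with càdlàg (right-continuous) paths:
    (hadp : ∀ t : ℝ≥0∞, StronglyMeasurable[F t] (X t))
    (hrc : ∀ ω, ∀ t : ℝ≥0, ContinuousWithinAt
      (fun s : ℝ≥0 => X (s : ℝ≥0∞) ω) (Set.Ici t) t)
    (τ : Ω → ℝ≥0∞) (hτ : IsStoppingTime F (fun ω => (τ ω : WithTop ℝ≥0∞)))
    -- on `{τ = ∞}`, `X ∞` is the a.s. limit of `X t` as `t → ∞`:
    (hlim : ∀ᵐ ω ∂P, τ ω = ∞ →
      Tendsto (fun t : ℝ≥0 => X (t : ℝ≥0∞) ω) atTop (𝓝 (X ∞ ω)))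
    -- (a) the stopped process `X^τ` is a supermartingale ...
    (hint : ∀ t : ℝ≥0∞, Integrable (fun ω => X (min t (τ ω)) ω) P)
    (hadpstop : ∀ t : ℝ≥0∞, StronglyMeasurable[F t] fun ω => X (min t (τ ω)) ω)
    (hsmg : ∀ s t : ℝ≥0∞, s ≤ t →
      (P[fun ω => X (min t (τ ω)) ω | F s])
        ≤ᵐ[P] fun ω => X (min s (τ ω)) ω)
    -- ... closed, i.e. bounded below by a uniformly integrable martingale:
    (M : ℝ≥0∞ → Ω → ℝ) (hM : Martingale M F P)
    (hMui : UniformIntegrable M 1 P)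
    (hMX : ∀ t, M t ≤ᵐ[P] fun ω => X (min t (τ ω)) ω)
    -- `σ ≤ τ` is a stopping time with `X_σ ~ X_τ`:
    (σ : Ω → ℝ≥0∞) (hσ : IsStoppingTime F (fun ω => (σ ω : WithTop ℝ≥0∞))) (hστ : ∀ ω, σ ω ≤ τ ω)
    (hlaw : Measure.map (fun ω => X (σ ω) ω) P
      = Measure.map (fun ω => X (τ ω) ω) P)
    -- (b) a.s. `X` has no intervals of constancy on `[0, τ)`:
    (hnc : ∀ᵐ ω ∂P, ∀ s t : ℝ≥0, s < t → (t : ℝ≥0∞) < τ ω →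
      ∃ u ∈ Set.Icc s t, X (u : ℝ≥0∞) ω ≠ X (s : ℝ≥0∞) ω) :
    σ =ᵐ[P] τ :=
  minimality_of_closed_supermartingale_stopping_general P F X hrc τ hint hadpstop hsmg σ hσ hστ hlaw
    hnc
end

section
/- Let $X^\tau$ be a closed supermartingale and $\sigma \le \tau$ stopping times with $X_\sigma \sim X_\tau$ (equal in distribution). Then $\mathsf E[X_\tau \mid \mathcal F_\sigma] = X_\sigma$ almost surely, and moreover $X_\tau = X_\sigma$ almost surely. -/
/-!
Put `Y = X^τ`, a right-continuous supermartingale indexed by `[0, ∞]`. The dyadic approximations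
`σₙ ↓ σ` take finitely many values, so discrete optional sampling applies to them; `(Y_{σₙ})` is a
backward supermartingale with bounded expectations, hence uniformly integrable, and converges to
`Y_σ` by right-continuity. Passing to the limit gives `E[Y_∞ | F_σ] ≤ Y_σ`, an equality because
`Y_σ = X_σ` and `Y_∞ = X_τ` have the same law, hence the same mean.

Then `T = X_τ` and `G = E[T | F_σ]` have the same law, so `E √(1 + T²) = E √(1 + G²)`, while the
tangent of `√(1 + x²)` at `G` has the same mean as `√(1 + G²)` (its slope is bounded and
`F_σ`-measurable). The nonnegative gap between the strictly convex function and its tangent has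
mean zero, which forces `T = G` almost surely.
-/

open MeasureTheory ProbabilityTheory Filter Set Function
open scoped ENNReal NNReal Topology

/-- The least multiple of `2⁻ⁿ` strictly above `s`, or `∞` once `s ≥ n`, so that the range is
finite. -/
noncomputable def dyadicApprox (n : ℕ) (s : ℝ≥0∞) : ℝ≥0∞ :=
  if s < n then ((⌊s.toNNReal * 2 ^ n⌋₊ + 1 : ℝ≥0) / 2 ^ n : ℝ≥0) else ∞

noncomputable def dyadicGrid (n : ℕ) : Finset ℝ≥0∞ :=
  insert ∞ ((Finset.range (n * 2 ^ n)).image fun k : ℕ => (((k + 1 : ℝ≥0) / 2 ^ n : ℝ≥0) : ℝ≥0∞))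

lemma dyadicApprox_top (n : ℕ) : dyadicApprox n ∞ = ∞ := by
  simp [dyadicApprox]

lemma le_dyadicApprox (n : ℕ) (s : ℝ≥0∞) : s ≤ dyadicApprox n s := by
  unfold dyadicApprox
  split_ifs with h
  · rw [← ENNReal.coe_toNNReal h.ne_top, ENNReal.coe_le_coe, le_div_iff₀ (by positivity)]
    exact (Nat.lt_floor_add_one _).le
  · exact le_top

lemma dyadicApprox_le_add {n : ℕ} {s : ℝ≥0∞} (h : s < n) :
    dyadicApprox n s ≤ s + ((2 ^ n)⁻¹ : ℝ≥0) := by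
  rw [dyadicApprox, if_pos h, ← ENNReal.coe_toNNReal h.ne_top, ← ENNReal.coe_add,
    ENNReal.coe_le_coe, div_le_iff₀ (by positivity), add_mul, inv_mul_cancel₀ (by positivity)]
  gcongr
  exact Nat.floor_le (by positivity)

lemma monotone_dyadicApprox (n : ℕ) : Monotone (dyadicApprox n) := by
  intro s s' hss'
  unfold dyadicApprox
  split_ifs with h h' h'
  · rw [ENNReal.coe_le_coe]
    gcongr
    exact h'.ne_top
  · exact le_top
  · exact absurd (hss'.trans_lt h') h
  · exact le_rfl

lemma dyadicApprox_succ_le (n : ℕ) (s : ℝ≥0∞) :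
    dyadicApprox (n + 1) s ≤ dyadicApprox n s := by
  unfold dyadicApprox
  split_ifs with h h' h'
  · rw [ENNReal.coe_le_coe, div_le_div_iff₀ (by positivity) (by positivity), pow_succ]
    set y := s.toNNReal * 2 ^ n
    have hfloor : (⌊y * 2⌋₊ : ℝ≥0) ≤ 2 * ⌊y⌋₊ + 1 := by
      have : (⌊y * 2⌋₊ : ℝ≥0) < 2 * ⌊y⌋₊ + 2 := by
        calc (⌊y * 2⌋₊ : ℝ≥0) ≤ y * 2 := Nat.floor_le (by positivity)
          _ < (⌊y⌋₊ + 1) * 2 := by gcongr; exact Nat.lt_floor_add_one y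
          _ = 2 * ⌊y⌋₊ + 2 := by ring
      exact_mod_cast Nat.le_of_lt_succ (by exact_mod_cast this)
    rw [show s.toNNReal * (2 ^ n * 2) = y * 2 by ring]
    calc (⌊y * 2⌋₊ + 1 : ℝ≥0) * 2 ^ n ≤ (2 * ⌊y⌋₊ + 2) * 2 ^ n :=
          mul_le_mul_of_nonneg_right (by linarith) (by positivity)
      _ = (⌊y⌋₊ + 1) * (2 ^ n * 2) := by ring
  · exact le_top
  · exact absurd (h'.trans (by exact_mod_cast n.lt_succ_self)) h
  · exact le_rfl

lemma antitone_dyadicApprox (s : ℝ≥0∞) : Antitone fun n => dyadicApprox n s :=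
  antitone_nat_of_succ_le fun n => dyadicApprox_succ_le n s

lemma tendsto_dyadicApprox (s : ℝ≥0∞) :
    Tendsto (fun n => dyadicApprox n s) atTop (𝓝 s) := by
  rcases eq_or_ne s ∞ with rfl | hs
  · simp [dyadicApprox_top]
  have hlt : ∀ᶠ n : ℕ in atTop, s < n := by
    obtain ⟨N, hN⟩ := ENNReal.exists_nat_gt hs
    exact eventually_atTop.2 ⟨N, fun n hn => hN.trans_le (by exact_mod_cast hn)⟩
  have hinv : Tendsto (fun n : ℕ => s + (((2 : ℝ≥0) ^ n)⁻¹ : ℝ≥0)) atTop (𝓝 s) := by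
    have : Tendsto (fun n : ℕ => ((2 : ℝ≥0) ^ n)⁻¹) atTop (𝓝 0) :=
      tendsto_inv_atTop_zero.comp (tendsto_pow_atTop_atTop_of_one_lt one_lt_two)
    simpa using tendsto_const_nhds.add (ENNReal.tendsto_coe.2 this)
  exact tendsto_of_tendsto_of_tendsto_of_le_of_le' tendsto_const_nhds hinv
    (Eventually.of_forall fun n => le_dyadicApprox n s)
    (hlt.mono fun n hn => dyadicApprox_le_add hn)

lemma dyadicApprox_mem_dyadicGrid (n : ℕ) (s : ℝ≥0∞) : dyadicApprox n s ∈ dyadicGrid n := by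
  unfold dyadicApprox dyadicGrid
  split_ifs with h
  · refine Finset.mem_insert_of_mem (Finset.mem_image.2 ⟨⌊s.toNNReal * 2 ^ n⌋₊, ?_, by simp⟩)
    rw [Finset.mem_range, Nat.floor_lt (by positivity)]
    push_cast
    gcongr
    rwa [← ENNReal.coe_lt_coe, ENNReal.coe_toNNReal h.ne_top]
  · exact Finset.mem_insert_self _ _

section StoppingTime

variable {Ω ι : Type*} {mΩ : MeasurableSpace Ω} [CompleteLinearOrder ι] [TopologicalSpace ι]
  [OrderTopology ι] [FirstCountableTopology ι] {F : Filtration ι mΩ}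

theorem MeasureTheory.IsStoppingTime.comp_monotone {σ : Ω → ι}
    (hσ : IsStoppingTime F fun ω => (σ ω : WithTop ι)) {e : ι → ι} (he : Monotone e)
    (hle : ∀ s, s ≤ e s) :
    IsStoppingTime F fun ω => (e (σ ω) : WithTop ι) := by
  intro t
  simp only [WithTop.coe_le_coe]
  -- `{s | e s ≤ t}` is a lower set below `t`, hence `Iic u` or `Iio u` for its supremum `u`
  set D := {s | e s ≤ t}
  have hD : ∀ ⦃s' s⦄, s' ≤ s → s ∈ D → s' ∈ D := fun _ _ h hs => (he h).trans hs
  have hut : sSup D ≤ t := sSup_le fun s hs => (hle s).trans hs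
  by_cases hu : sSup D ∈ D
  · have : {ω | e (σ ω) ≤ t} = {ω | σ ω ≤ sSup D} :=
      Set.ext fun ω => ⟨fun h => le_sSup (show σ ω ∈ D from h), fun h => hD h hu⟩
    rw [this]
    exact F.mono hut _ (by simpa only [WithTop.coe_le_coe] using hσ (sSup D))
  · have : {ω | e (σ ω) ≤ t} = {ω | σ ω < sSup D} := by
      refine Set.ext fun ω => ⟨fun h => ?_, fun h => ?_⟩
      · exact (le_sSup (show σ ω ∈ D from h)).lt_of_ne fun h' => hu (h' ▸ h)
      obtain ⟨s, hs, hlt⟩ := lt_sSup_iff.1 h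
      exact hD hlt.le hs
    rw [this]
    exact F.mono hut _ (by simpa only [WithTop.coe_lt_coe] using hσ.measurableSet_lt (sSup D))

end StoppingTime

theorem continuousWithinAt_Ici_of_coe {α : Type*} [TopologicalSpace α] {f : ℝ≥0∞ → α}
    (hf : ∀ t : ℝ≥0, ContinuousWithinAt (fun s : ℝ≥0 => f s) (Ici t) t) (t : ℝ≥0∞) :
    ContinuousWithinAt f (Ici t) t := by
  induction t with
  | top => simp
  | coe c =>
    have hfin : Iio ∞ ∈ 𝓝 (c : ℝ≥0∞) := Iio_mem_nhds ENNReal.coe_lt_top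
    rw [← continuousWithinAt_inter hfin]
    refine ((hf c).comp_of_eq (ContinuousAt.continuousWithinAt (f := ENNReal.toNNReal)
      (ENNReal.tendsto_toNNReal ENNReal.coe_ne_top))
      (fun s hs => ?_) (by simp)).congr (fun s hs => ?_) (by simp)
    · simpa using ENNReal.toNNReal_mono hs.2.ne hs.1
    · simp [ENNReal.coe_toNNReal hs.2.ne]

theorem MeasureTheory.StronglyAdapted.isStronglyProgressive_of_continuousWithinAt_Ici {Ω : Type*}
    {mΩ : MeasurableSpace Ω} {F : Filtration ℝ≥0∞ mΩ} {Y : ℝ≥0∞ → Ω → ℝ}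
    (hY : StronglyAdapted F Y) (hrc : ∀ ω t, ContinuousWithinAt (fun s => Y s ω) (Ici t) t) :
    IsStronglyProgressive F Y := by
  intro t
  let : MeasurableSpace Ω := F t
  -- approximate the time from above, capped at `t` so that only `F t`-measurable values enter
  set φ : ℕ → Iic t → ℝ≥0∞ := fun n s => min t (dyadicApprox n s)
  have happrox : ∀ n, StronglyMeasurable fun p : Iic t × Ω => Y (φ n p.1) p.2 := by
    intro n
    set V : Finset ℝ≥0∞ := (dyadicGrid n).image (min t)
    have hV : ∀ s, φ n s ∈ V := fun s => Finset.mem_image_of_mem _ (dyadicApprox_mem_dyadicGrid n s)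
    have hYV : Measurable fun q : Ω × V => Y q.2 q.1 := by
      refine measurable_from_prod_countable_left fun v => ((hY v).mono (F.mono ?_)).measurable
      obtain ⟨w, -, hw⟩ := Finset.mem_image.1 v.2
      exact hw ▸ min_le_left t w
    have hφ : Measurable (φ n) :=
      measurable_const.min ((monotone_dyadicApprox n).measurable.comp measurable_subtype_coe)
    have hφV : Measurable fun s => (⟨φ n s, hV s⟩ : V) := hφ.subtype_mk
    exact (hYV.comp (measurable_snd.prodMk (hφV.comp measurable_fst))).stronglyMeasurable
  refine stronglyMeasurable_of_tendsto atTop happrox (tendsto_pi_nhds.2 fun p => ?_)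
  have hφ : Tendsto (fun n => φ n p.1) atTop (𝓝[≥] (p.1 : ℝ≥0∞)) := by
    have hge : ∀ n, (p.1 : ℝ≥0∞) ≤ φ n p.1 := fun n => le_min p.1.2 (le_dyadicApprox n _)
    refine tendsto_nhdsWithin_iff.2 ⟨?_, Eventually.of_forall hge⟩
    exact tendsto_of_tendsto_of_tendsto_of_le_of_le tendsto_const_nhds (tendsto_dyadicApprox _)
      hge fun n => min_le_right _ _
  exact (hrc p.2 p.1).tendsto.comp hφ

section OptionalSampling

variable {Ω ι : Type*} {mΩ : MeasurableSpace Ω} {P : Measure Ω} [IsFiniteMeasure P]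

theorem condExp_le_of_forall_setIntegral_le {m : MeasurableSpace Ω} (hm : m ≤ mΩ) {f g : Ω → ℝ}
    (hf : Integrable f P) (hg : Integrable g P) (hgm : StronglyMeasurable[m] g)
    (hfg : ∀ A, MeasurableSet[m] A → ∫ ω in A, f ω ∂P ≤ ∫ ω in A, g ω ∂P) :
    P[f | m] ≤ᵐ[P] g := by
  refine ae_le_of_ae_le_trim (hm := hm) (ae_le_of_forall_setIntegral_le
    (integrable_condExp.trim hm stronglyMeasurable_condExp) (hg.trim hm hgm) fun A hA _ => ?_)
  rw [← setIntegral_trim hm stronglyMeasurable_condExp hA, ← setIntegral_trim hm hgm hA,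
    setIntegral_condExp hm hf hA]
  exact hfg A hA

variable [LinearOrder ι] {F : Filtration ι mΩ} {Y : ι → Ω → ℝ}

theorem MeasureTheory.Supermartingale.setIntegral_stoppedValue_le_of_const_le
    (hY : Supermartingale Y F P) {π : Ω → ι} (hπ : IsStoppingTime F fun ω => (π ω : WithTop ι))
    {s : Finset ι} (hπs : ∀ ω, π ω ∈ s) {r : ι} {B : Set Ω} (hB : MeasurableSet[F r] B)
    (hrπ : ∀ ω ∈ B, r ≤ π ω) :
    ∫ ω in B, Y (π ω) ω ∂P ≤ ∫ ω in B, Y r ω ∂P := by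
  have : Nonempty ι := ⟨r⟩
  induction hk : (s.filter (r < ·)).card using Nat.strong_induction_on generalizing r B with
  | _ k ih =>
  have hπint : Integrable (fun ω => Y (π ω) ω) P :=
    integrable_stoppedValue_of_mem_finset hπ hY.integrable fun ω => mem_image_of_mem _ (hπs ω)
  have hgt : MeasurableSet[F r] {ω | r < π ω} := by simpa using hπ.measurableSet_gt r
  have hle : ∫ ω in B \ {ω | r < π ω}, Y (π ω) ω ∂P = ∫ ω in B \ {ω | r < π ω}, Y r ω ∂P :=
    setIntegral_congr_fun ((F.le r _ hB).diff (F.le r _ hgt)) fun ω hω => by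
      rw [(hrπ ω hω.1).antisymm (not_lt.1 hω.2)]
  rw [← integral_inter_add_sdiff (F.le r _ hgt) hπint.integrableOn,
    ← integral_inter_add_sdiff (F.le r _ hgt) (hY.integrable r).integrableOn]
  refine add_le_add ?_ hle.le
  rcases (s.filter (r < ·)).eq_empty_or_nonempty with hempty | hne
  · have : B ∩ {ω | r < π ω} = ∅ := by
      refine eq_empty_of_forall_notMem fun ω hω => ?_
      exact Finset.eq_empty_iff_forall_notMem.1 hempty _ (Finset.mem_filter.2 ⟨hπs ω, hω.2⟩)
    simp [this]
  -- on `{r < π}`, step from `r` to the next point `r'` of `s`, where induction applies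
  set r' := (s.filter (r < ·)).min' hne
  have hr' : r < r' := (Finset.mem_filter.1 (Finset.min'_mem _ hne)).2
  have hr'_le : ∀ ω, r < π ω → r' ≤ π ω := fun ω h => Finset.min'_le _ _ (by simp [hπs ω, h])
  have hcard : (s.filter (r' < ·)).card < k := hk ▸ Finset.card_lt_card
    ((Finset.ssubset_iff_of_subset (Finset.monotone_filter_right _ fun _ _ => hr'.trans)).2
      ⟨r', Finset.min'_mem _ hne, by simp⟩)
  calc ∫ ω in B ∩ {ω | r < π ω}, Y (π ω) ω ∂P ≤ ∫ ω in B ∩ {ω | r < π ω}, Y r' ω ∂P :=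
        ih _ hcard (F.mono hr'.le _ (hB.inter hgt)) (fun ω hω => hr'_le ω hω.2) rfl
    _ ≤ ∫ ω in B ∩ {ω | r < π ω}, Y r ω ∂P := hY.setIntegral_le hr'.le (hB.inter hgt)

theorem MeasureTheory.Supermartingale.setIntegral_stoppedValue_le_of_le
    (hY : Supermartingale Y F P) {ρ π : Ω → ι} (hρ : IsStoppingTime F fun ω => (ρ ω : WithTop ι))
    (hπ : IsStoppingTime F fun ω => (π ω : WithTop ι)) {s : Finset ι} (hρs : ∀ ω, ρ ω ∈ s)
    (hπs : ∀ ω, π ω ∈ s) (hρπ : ∀ ω, ρ ω ≤ π ω) {A : Set Ω}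
    (hA : MeasurableSet[hρ.measurableSpace] A) :
    ∫ ω in A, Y (π ω) ω ∂P ≤ ∫ ω in A, Y (ρ ω) ω ∂P := by
  have hcount : (range fun ω => (ρ ω : WithTop ι)).Countable :=
    ((s.finite_toSet.image _).subset
      (range_subset_iff.2 fun ω => mem_image_of_mem _ (hρs ω))).countable
  have hAr : ∀ r, MeasurableSet[F r] (A ∩ {ω | ρ ω = r}) := fun r => by
    simpa using (hρ.measurableSet_inter_eq_iff A r).1
      (hA.inter (hρ.measurableSet_eq_of_countable_range' hcount r))
  have hA_eq : A = ⋃ r ∈ s, A ∩ {ω | ρ ω = r} := by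
    ext ω
    simpa using fun _ => hρs ω
  have hdisj : (s : Set ι).Pairwise (Disjoint on fun r => A ∩ {ω | ρ ω = r}) :=
    fun r _ r' _ hrr' => Set.disjoint_left.2 fun ω h h' => hrr' (h.2.symm.trans h'.2)
  have hint (r : ι) (f : Ω → ι) (hf : ∀ ω, f ω ∈ s)
      (hst : IsStoppingTime F fun ω => (f ω : WithTop ι)) : Integrable (fun ω => Y (f ω) ω) P :=
    have : Nonempty ι := ⟨r⟩
    integrable_stoppedValue_of_mem_finset hst hY.integrable fun ω => mem_image_of_mem _ (hf ω)
  rw [hA_eq, integral_biUnion_finset s (fun r _ => F.le r _ (hAr r)) hdisj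
      fun r _ => (hint r π hπs hπ).integrableOn,
    integral_biUnion_finset s (fun r _ => F.le r _ (hAr r)) hdisj
      fun r _ => (hint r ρ hρs hρ).integrableOn]
  refine Finset.sum_le_sum fun r _ => ?_
  calc ∫ ω in A ∩ {ω | ρ ω = r}, Y (π ω) ω ∂P ≤ ∫ ω in A ∩ {ω | ρ ω = r}, Y r ω ∂P :=
        hY.setIntegral_stoppedValue_le_of_const_le hπ hπs (hAr r) fun ω hω => hω.2 ▸ hρπ ω
    _ = ∫ ω in A ∩ {ω | ρ ω = r}, Y (ρ ω) ω ∂P :=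
        setIntegral_congr_fun (F.le r _ (hAr r)) fun ω hω => by rw [hω.2]

end OptionalSampling

section BackwardSupermartingale

variable {Ω : Type*} {mΩ : MeasurableSpace Ω} {P : Measure Ω}

theorem eLpNorm_indicator_le_integral_sub_add {f g : Ω → ℝ} (hf : Integrable f P)
    (hg : Integrable g P) (hfg : f ≤ᵐ[P] g) {A : Set Ω} (hA : MeasurableSet A) :
    eLpNorm (A.indicator g) 1 P ≤
      ENNReal.ofReal (∫ ω, g ω ∂P - ∫ ω, f ω ∂P) + eLpNorm (A.indicator f) 1 P := by
  have hsplit : A.indicator g = A.indicator (g - f) + A.indicator f := by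
    rw [← indicator_add', sub_add_cancel]
  have hgf : ∫⁻ ω, ‖(g - f) ω‖ₑ ∂P = ENNReal.ofReal (∫ ω, (g - f) ω ∂P) := by
    rw [ofReal_integral_eq_lintegral_ofReal (hg.sub hf) (sub_nonneg_ae _ _ |>.2 hfg)]
    refine lintegral_congr_ae ?_
    filter_upwards [hfg] with ω h
    exact Real.enorm_of_nonneg (sub_nonneg.2 h)
  calc eLpNorm (A.indicator g) 1 P
      ≤ eLpNorm (A.indicator (g - f)) 1 P + eLpNorm (A.indicator f) 1 P := by
        rw [hsplit]
        exact eLpNorm_add_le ((hg.sub hf).aestronglyMeasurable.indicator hA)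
          (hf.aestronglyMeasurable.indicator hA) le_rfl
    _ ≤ eLpNorm (g - f) 1 P + eLpNorm (A.indicator f) 1 P := by
        gcongr; exact eLpNorm_indicator_le _
    _ = _ := by rw [eLpNorm_one_eq_lintegral_enorm, hgf, integral_sub' hg hf]

theorem uniformIntegrable_of_condExp_le [IsFiniteMeasure P] {ℱ : ℕ → MeasurableSpace Ω}
    (hℱ : ∀ n, ℱ n ≤ mΩ) {g : ℕ → Ω → ℝ} (hg : ∀ n, Integrable (g n) P)
    (hcond : ∀ m n, m ≤ n → P[g m | ℱ n] ≤ᵐ[P] g n)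
    (hbdd : BddAbove (range fun n => ∫ ω, g n ω ∂P)) : UniformIntegrable g 1 P := by
  set a := fun n => ∫ ω, g n ω ∂P
  have hle : ∀ m n, m ≤ n → ∀ A, MeasurableSet A → eLpNorm (A.indicator (g n)) 1 P ≤
      ENNReal.ofReal (a n - a m) + eLpNorm (A.indicator (P[g m | ℱ n])) 1 P :=
    fun m n hmn A hA => by
      simpa only [a, integral_condExp (hℱ n)] using
        eLpNorm_indicator_le_integral_sub_add integrable_condExp (hg n) (hcond m n hmn) hA
  refine ⟨fun n => (hg n).aestronglyMeasurable, fun ε hε => ?_, ?_⟩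
  · obtain ⟨m, hm⟩ := exists_lt_of_lt_ciSup (sub_lt_self (⨆ n, a n) (half_pos hε))
    obtain ⟨δ₁, hδ₁, h₁⟩ := ((hg m).uniformIntegrable_condExp hℱ).2.1 (half_pos hε)
    obtain ⟨δ₂, hδ₂, h₂⟩ := unifIntegrable_fin le_rfl ENNReal.one_ne_top
      (f := fun i : Fin (m + 1) => g i) (fun i => memLp_one_iff_integrable.2 (hg i)) hε
    refine ⟨min δ₁ δ₂, lt_min hδ₁ hδ₂, fun n A hA hPA => ?_⟩
    rcases le_or_gt n m with hnm | hmn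
    · exact h₂ ⟨n, Nat.lt_succ_of_le hnm⟩ A hA
        (hPA.trans (ENNReal.ofReal_le_ofReal (min_le_right _ _)))
    calc eLpNorm (A.indicator (g n)) 1 P
        ≤ ENNReal.ofReal (a n - a m) + eLpNorm (A.indicator (P[g m | ℱ n])) 1 P :=
          hle m n hmn.le A hA
      _ ≤ ENNReal.ofReal (ε / 2) + ENNReal.ofReal (ε / 2) := by
          gcongr
          · linarith [le_ciSup hbdd n]
          · exact h₁ n A hA (hPA.trans (ENNReal.ofReal_le_ofReal (min_le_left _ _)))
      _ = ENNReal.ofReal ε := by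
          rw [← ENNReal.ofReal_add (by positivity) (by positivity), add_halves]
  · refine ⟨(ENNReal.ofReal ((⨆ n, a n) - a 0) + eLpNorm (g 0) 1 P).toNNReal, fun n => ?_⟩
    rw [ENNReal.coe_toNNReal (ENNReal.add_ne_top.2
      ⟨ENNReal.ofReal_ne_top, (memLp_one_iff_integrable.2 (hg 0)).eLpNorm_ne_top⟩)]
    calc eLpNorm (g n) 1 P ≤ ENNReal.ofReal (a n - a 0) + eLpNorm (P[g 0 | ℱ n]) 1 P := by
          simpa using hle 0 n n.zero_le univ MeasurableSet.univ
      _ ≤ _ := by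
          gcongr
          · exact le_ciSup hbdd n
          · exact eLpNorm_condExp_le_eLpNorm _ le_rfl

end BackwardSupermartingale

section RightContinuous

variable {Ω : Type*} {mΩ : MeasurableSpace Ω} {P : Measure Ω} [IsFiniteMeasure P]
  {F : Filtration ℝ≥0∞ mΩ} {Y : ℝ≥0∞ → Ω → ℝ} {σ : Ω → ℝ≥0∞}

theorem isStoppingTime_dyadicApprox (hσ : IsStoppingTime F fun ω => (σ ω : WithTop ℝ≥0∞))
    (n : ℕ) : IsStoppingTime F fun ω => (dyadicApprox n (σ ω) : WithTop ℝ≥0∞) :=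
  hσ.comp_monotone (monotone_dyadicApprox n) (le_dyadicApprox n)

theorem MeasureTheory.Supermartingale.uniformIntegrable_comp_dyadicApprox
    (hY : Supermartingale Y F P) (hprog : IsStronglyProgressive F Y)
    (hσ : IsStoppingTime F fun ω => (σ ω : WithTop ℝ≥0∞)) :
    UniformIntegrable (fun n ω => Y (dyadicApprox n (σ ω)) ω) 1 P := by
  have hσn := isStoppingTime_dyadicApprox hσ
  have hint : ∀ n, Integrable (fun ω => Y (dyadicApprox n (σ ω)) ω) P := fun n =>
    integrable_stoppedValue_of_mem_finset (hσn n) hY.integrable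
      fun ω => mem_image_of_mem _ (dyadicApprox_mem_dyadicGrid n (σ ω))
  refine uniformIntegrable_of_condExp_le (fun n => (hσn n).measurableSpace_le) hint
    (fun m n hmn => ?_) ⟨∫ ω, Y 0 ω ∂P, ?_⟩
  · refine condExp_le_of_forall_setIntegral_le (hσn n).measurableSpace_le (hint m) (hint n)
      (measurable_stoppedValue hprog (hσn n)).stronglyMeasurable fun A hA => ?_
    exact hY.setIntegral_stoppedValue_le_of_le (hσn n) (hσn m) (s := dyadicGrid n ∪ dyadicGrid m)
      (fun ω => Finset.mem_union_left _ (dyadicApprox_mem_dyadicGrid n _))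
      (fun ω => Finset.mem_union_right _ (dyadicApprox_mem_dyadicGrid m _))
      (fun ω => antitone_dyadicApprox (σ ω) hmn) hA
  · rintro _ ⟨n, rfl⟩
    simpa using hY.setIntegral_stoppedValue_le_of_const_le (hσn n)
      (fun ω => dyadicApprox_mem_dyadicGrid n (σ ω)) MeasurableSet.univ fun ω _ => zero_le

theorem tendsto_dyadicApprox_of_continuousWithinAt
    (hrc : ∀ ω t, ContinuousWithinAt (fun s => Y s ω) (Ici t) t) (ω : Ω) :
    Tendsto (fun n => Y (dyadicApprox n (σ ω)) ω) atTop (𝓝 (Y (σ ω) ω)) :=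
  (hrc ω (σ ω)).tendsto.comp (tendsto_nhdsWithin_iff.2
    ⟨tendsto_dyadicApprox _, Eventually.of_forall fun n => le_dyadicApprox n _⟩)

theorem MeasureTheory.Supermartingale.integrable_stoppedValue_of_continuousWithinAt
    (hY : Supermartingale Y F P) (hrc : ∀ ω t, ContinuousWithinAt (fun s => Y s ω) (Ici t) t)
    (hσ : IsStoppingTime F fun ω => (σ ω : WithTop ℝ≥0∞)) :
    Integrable (fun ω => Y (σ ω) ω) P := by
  have hprog := hY.stronglyAdapted.isStronglyProgressive_of_continuousWithinAt_Ici hrc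
  exact (hY.uniformIntegrable_comp_dyadicApprox hprog hσ).integrable_of_ae_tendsto
    (ae_of_all _ (tendsto_dyadicApprox_of_continuousWithinAt hrc))

theorem MeasureTheory.Supermartingale.condExp_top_le_stoppedValue_of_continuousWithinAt
    (hY : Supermartingale Y F P) (hrc : ∀ ω t, ContinuousWithinAt (fun s => Y s ω) (Ici t) t)
    (hσ : IsStoppingTime F fun ω => (σ ω : WithTop ℝ≥0∞)) :
    P[Y ∞ | hσ.measurableSpace] ≤ᵐ[P] fun ω => Y (σ ω) ω := by
  have hprog := hY.stronglyAdapted.isStronglyProgressive_of_continuousWithinAt_Ici hrc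
  have hσn := isStoppingTime_dyadicApprox hσ
  have hUI := hY.uniformIntegrable_comp_dyadicApprox hprog hσ
  have hint := hY.integrable_stoppedValue_of_continuousWithinAt hrc hσ
  have hL1 : Tendsto (fun n => eLpNorm ((fun ω => Y (dyadicApprox n (σ ω)) ω) -
      fun ω => Y (σ ω) ω) 1 P) atTop (𝓝 0) :=
    tendsto_Lp_finite_of_tendsto_ae le_rfl ENNReal.one_ne_top hUI.1
      (memLp_one_iff_integrable.2 hint) hUI.2.1
      (ae_of_all _ (tendsto_dyadicApprox_of_continuousWithinAt hrc))
  refine condExp_le_of_forall_setIntegral_le hσ.measurableSpace_le (hY.integrable ∞) hint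
    (measurable_stoppedValue hprog hσ).stronglyMeasurable fun A hA => ?_
  refine ge_of_tendsto (tendsto_setIntegral_of_L1' _ hint.aestronglyMeasurable
    (Eventually.of_forall fun n => (memLp_one_iff_integrable.1 (hUI.memLp n))) hL1 A)
    (Eventually.of_forall fun n => ?_)
  exact hY.setIntegral_stoppedValue_le_of_le (hσn n) (isStoppingTime_const F ∞) (π := fun _ => ∞)
    (s := insert ∞ (dyadicGrid n))
    (fun ω => Finset.mem_insert_of_mem (dyadicApprox_mem_dyadicGrid n _))
    (fun _ => Finset.mem_insert_self _ _) (fun _ => le_top)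
    (hσ.measurableSpace_mono (hσn n) (fun ω => WithTop.coe_le_coe.2 (le_dyadicApprox n _)) A hA)

end RightContinuous

section SameLaw

theorem sqrt_one_add_sq_mul_sqrt_one_add_sq (x y : ℝ) :
    √(1 + x ^ 2) * √(1 + y ^ 2) = √((1 + x * y) ^ 2 + (x - y) ^ 2) := by
  rw [← Real.sqrt_mul (by positivity)]
  ring_nf

theorem one_add_mul_le_sqrt_mul_sqrt (x y : ℝ) : 1 + x * y ≤ √(1 + x ^ 2) * √(1 + y ^ 2) := by
  rw [sqrt_one_add_sq_mul_sqrt_one_add_sq]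
  exact Real.le_sqrt_of_sq_le (by nlinarith [sq_nonneg (x - y)])

theorem eq_of_sqrt_mul_sqrt_eq {x y : ℝ} (h : √(1 + x ^ 2) * √(1 + y ^ 2) = 1 + x * y) :
    x = y := by
  rw [sqrt_one_add_sq_mul_sqrt_one_add_sq, Real.sqrt_eq_iff_mul_self_eq (by positivity)
    (h ▸ by positivity)] at h
  nlinarith [sq_nonneg (x - y)]

theorem sqrt_one_add_sq_sub_tangent (x y : ℝ) :
    √(1 + y ^ 2) - √(1 + x ^ 2) - x / √(1 + x ^ 2) * (y - x) =
      (√(1 + x ^ 2) * √(1 + y ^ 2) - (1 + x * y)) / √(1 + x ^ 2) := by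
  have hx : 0 < √(1 + x ^ 2) := Real.sqrt_pos.2 (by positivity)
  field_simp
  linear_combination -Real.sq_sqrt (by positivity : (0 : ℝ) ≤ 1 + x ^ 2)

variable {Ω : Type*} {m mΩ : MeasurableSpace Ω} {P : Measure Ω} [IsFiniteMeasure P]

theorem ae_eq_condExp_of_identDistrib (hm : m ≤ mΩ) {T : Ω → ℝ}
    (hT : Integrable T P) (hlaw : IdentDistrib (P[T | m]) T P P) : T =ᵐ[P] P[T | m] := by
  set G := P[T | m]
  set φ : ℝ → ℝ := fun x => √(1 + x ^ 2)
  set ψ : ℝ → ℝ := fun x => x / √(1 + x ^ 2)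
  have hφ_pos : ∀ x, 0 < φ x := fun x => Real.sqrt_pos.2 (by positivity)
  have hφ : Continuous φ := by fun_prop
  have hψ_le : ∀ x, ‖ψ x‖ ≤ 1 := fun x => by
    rw [Real.norm_eq_abs, abs_div, abs_of_pos (hφ_pos x), div_le_one (hφ_pos x)]
    exact Real.abs_le_sqrt (by linarith)
  have hφ_int : ∀ f : Ω → ℝ, Integrable f P → Integrable (fun ω => φ (f ω)) P := fun f hf =>
    ((integrable_const 1).add hf.abs).mono' (hφ.comp_aestronglyMeasurable hf.1)
      (ae_of_all _ fun ω => by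
        rw [Real.norm_of_nonneg (hφ_pos _).le, Pi.add_apply]
        exact Real.sqrt_le_iff.2 ⟨by positivity, by nlinarith [abs_nonneg (f ω), sq_abs (f ω)]⟩)
  have hG : Integrable G P := integrable_condExp
  have hψG : StronglyMeasurable[m] fun ω => ψ (G ω) := by fun_prop
  have hψGT : Integrable (fun ω => ψ (G ω) * T ω) P :=
    hT.bdd_mul (hψG.mono hm).aestronglyMeasurable (ae_of_all _ fun ω => hψ_le _)
  have hψGG : Integrable (fun ω => ψ (G ω) * G ω) P :=
    hG.bdd_mul (hψG.mono hm).aestronglyMeasurable (ae_of_all _ fun ω => hψ_le _)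
  have hφ_eq : ∫ ω, φ (G ω) ∂P = ∫ ω, φ (T ω) ∂P := (hlaw.comp hφ.measurable).integral_eq
  have hψ_eq : ∫ ω, ψ (G ω) * T ω ∂P = ∫ ω, ψ (G ω) * G ω ∂P := by
    rw [← integral_condExp hm]
    exact integral_congr_ae (condExp_stronglyMeasurable_mul_of_bound hm hψG hT 1
      (ae_of_all _ fun ω => hψ_le _))
  -- the gap between `φ ∘ T` and the tangent line of `φ` at `G`
  set Z : Ω → ℝ := fun ω => φ (T ω) - φ (G ω) - ψ (G ω) * (T ω - G ω)
  have hZ_nonneg : 0 ≤ Z := fun ω => by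
    simp only [Z, φ, ψ, sqrt_one_add_sq_sub_tangent, Pi.zero_apply]
    exact div_nonneg (sub_nonneg.2 (one_add_mul_le_sqrt_mul_sqrt _ _)) (hφ_pos _).le
  have hZ_eq : Z = fun ω => (φ (T ω) - φ (G ω)) - (ψ (G ω) * T ω - ψ (G ω) * G ω) := by
    ext ω; simp only [Z]; ring
  have hφTG : Integrable (fun ω => φ (T ω) - φ (G ω)) P := (hφ_int T hT).sub (hφ_int G hG)
  have hψTG : Integrable (fun ω => ψ (G ω) * T ω - ψ (G ω) * G ω) P := hψGT.sub hψGG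
  have hZ_int : Integrable Z P := hZ_eq ▸ hφTG.sub hψTG
  have hZ : ∫ ω, Z ω ∂P = 0 := by
    simp only [hZ_eq]
    rw [integral_sub hφTG hψTG, integral_sub (hφ_int T hT) (hφ_int G hG),
      integral_sub hψGT hψGG, hφ_eq, hψ_eq, sub_self, sub_self, sub_self]
  filter_upwards [(integral_eq_zero_iff_of_nonneg hZ_nonneg hZ_int).1 hZ] with ω hω
  refine (eq_of_sqrt_mul_sqrt_eq ?_).symm
  simpa only [Z, φ, ψ, sqrt_one_add_sq_sub_tangent, Pi.zero_apply, div_eq_zero_iff,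
    (hφ_pos _).ne', or_false, sub_eq_zero] using hω

end SameLaw

theorem condexp_eq_and_eq_of_same_law_general
    {Ω : Type*} {mΩ : MeasurableSpace Ω} (P : Measure Ω)
    [IsProbabilityMeasure P] (F : Filtration ℝ≥0∞ mΩ) (X : ℝ≥0∞ → Ω → ℝ)
    -- `X` is adapted with càdlàg (right-continuous) paths:
    (hrc : ∀ ω, ∀ t : ℝ≥0, ContinuousWithinAt
      (fun s : ℝ≥0 => X (s : ℝ≥0∞) ω) (Set.Ici t) t)
    (τ : Ω → ℝ≥0∞)
    -- (a) the stopped process `X^τ` is a supermartingale ...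
    (hint : ∀ t : ℝ≥0∞, Integrable (fun ω => X (min t (τ ω)) ω) P)
    (hadpstop : ∀ t : ℝ≥0∞, StronglyMeasurable[F t] fun ω => X (min t (τ ω)) ω)
    (hsmg : ∀ s t : ℝ≥0∞, s ≤ t →
      (P[fun ω => X (min t (τ ω)) ω | F s])
        ≤ᵐ[P] fun ω => X (min s (τ ω)) ω)
    -- `σ ≤ τ` is a stopping time with `X_σ ~ X_τ`:
    (σ : Ω → ℝ≥0∞) (hσ : IsStoppingTime F (fun ω => (σ ω : WithTop ℝ≥0∞))) (hστ : ∀ ω, σ ω ≤ τ ω)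
    (hlaw : Measure.map (fun ω => X (σ ω) ω) P
      = Measure.map (fun ω => X (τ ω) ω) P)
    :
    (P[fun ω => X (τ ω) ω | hσ.measurableSpace])
        =ᵐ[P] (fun ω => X (σ ω) ω) ∧
    (fun ω => X (τ ω) ω) =ᵐ[P] fun ω => X (σ ω) ω := by
  set Y : ℝ≥0∞ → Ω → ℝ := fun t ω => X (min t (τ ω)) ω
  have hY : Supermartingale Y F P := ⟨hadpstop, hsmg, hint⟩
  have hYrc : ∀ ω t, ContinuousWithinAt (fun s => Y s ω) (Ici t) t := fun ω t => by
    have hmin : ContinuousWithinAt (fun s => min s (τ ω)) (Ici t) t :=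
      (continuous_id.min continuous_const).continuousWithinAt
    exact (continuousWithinAt_Ici_of_coe (f := (X · ω)) (hrc ω) _).comp hmin
      fun s hs => min_le_min_right (τ ω) (mem_Ici.1 hs)
  have hYσ : (fun ω => Y (σ ω) ω) = fun ω => X (σ ω) ω :=
    funext fun ω => by simp only [Y, min_eq_left (hστ ω)]
  have hYtop : Y ∞ = fun ω => X (τ ω) ω := funext fun ω => by simp only [Y, min_eq_right le_top]
  have hle := hY.condExp_top_le_stoppedValue_of_continuousWithinAt hYrc hσ
  have hXσ := hY.integrable_stoppedValue_of_continuousWithinAt hYrc hσ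
  have hXτ := hY.integrable ∞
  rw [hYσ, hYtop] at *
  have hlaw' : IdentDistrib (fun ω => X (σ ω) ω) (fun ω => X (τ ω) ω) P P :=
    ⟨hXσ.aemeasurable, hXτ.aemeasurable, hlaw⟩
  have hcond : P[fun ω => X (τ ω) ω | hσ.measurableSpace] =ᵐ[P] fun ω => X (σ ω) ω := by
    refine (integral_eq_iff_of_ae_le integrable_condExp hXσ hle).1 ?_
    rw [integral_condExp hσ.measurableSpace_le, hlaw'.integral_eq]
  refine ⟨hcond, (ae_eq_condExp_of_identDistrib hσ.measurableSpace_le hXτ ?_).trans hcond⟩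
  exact (IdentDistrib.of_ae_eq integrable_condExp.aemeasurable hcond).trans hlaw'

/-- if `X^τ` is a closed supermartingale and `σ ≤ τ` are
stopping times with `X_σ ~ X_τ`, then `E[X_τ | F_σ] = X_σ` a.s. and
moreover `X_τ = X_σ` a.s. -/
theorem condexp_eq_and_eq_of_same_law
    {Ω : Type*} {mΩ : MeasurableSpace Ω} (P : Measure Ω)
    [IsProbabilityMeasure P] (F : Filtration ℝ≥0∞ mΩ) (X : ℝ≥0∞ → Ω → ℝ)
    -- `X` is adapted with càdlàg (right-continuous) paths:
    (hadp : ∀ t : ℝ≥0∞, StronglyMeasurable[F t] (X t))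
    (hrc : ∀ ω, ∀ t : ℝ≥0, ContinuousWithinAt
      (fun s : ℝ≥0 => X (s : ℝ≥0∞) ω) (Set.Ici t) t)
    (τ : Ω → ℝ≥0∞) (hτ : IsStoppingTime F (fun ω => (τ ω : WithTop ℝ≥0∞)))
    -- on `{τ = ∞}`, `X ∞` is the a.s. limit of `X t` as `t → ∞`:
    (hlim : ∀ᵐ ω ∂P, τ ω = ∞ →
      Tendsto (fun t : ℝ≥0 => X (t : ℝ≥0∞) ω) atTop (𝓝 (X ∞ ω)))
    -- (a) the stopped process `X^τ` is a supermartingale ...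
    (hint : ∀ t : ℝ≥0∞, Integrable (fun ω => X (min t (τ ω)) ω) P)
    (hadpstop : ∀ t : ℝ≥0∞, StronglyMeasurable[F t] fun ω => X (min t (τ ω)) ω)
    (hsmg : ∀ s t : ℝ≥0∞, s ≤ t →
      (P[fun ω => X (min t (τ ω)) ω | F s])
        ≤ᵐ[P] fun ω => X (min s (τ ω)) ω)
    -- ... closed, i.e. bounded below by a uniformly integrable martingale:
    (M : ℝ≥0∞ → Ω → ℝ) (hM : Martingale M F P)
    (hMui : UniformIntegrable M 1 P)
    (hMX : ∀ t, M t ≤ᵐ[P] fun ω => X (min t (τ ω)) ω)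
    -- `σ ≤ τ` is a stopping time with `X_σ ~ X_τ`:
    (σ : Ω → ℝ≥0∞) (hσ : IsStoppingTime F (fun ω => (σ ω : WithTop ℝ≥0∞))) (hστ : ∀ ω, σ ω ≤ τ ω)
    (hlaw : Measure.map (fun ω => X (σ ω) ω) P
      = Measure.map (fun ω => X (τ ω) ω) P)
    :
    (P[fun ω => X (τ ω) ω | hσ.measurableSpace])
        =ᵐ[P] (fun ω => X (σ ω) ω) ∧
    (fun ω => X (τ ω) ω) =ᵐ[P] fun ω => X (σ ω) ω :=
  condexp_eq_and_eq_of_same_law_general P F X hrc τ hint hadpstop hsmg σ hσ hστ hlaw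
end

section
/- Let $\xi$ be a nonnegative random variable with $\mathsf E\xi \le 1$ and distribution function $F$, quantile function $F^{-1}$, $h(r) = \int_0^r F^{-1}(s)\,ds$, and $g(r) = r - h(r)$, and let $R$ be uniform on $[0,1]$ with $\eta = g(R)$ and $\xi = F^{-1}(R)$. Then for any interval $(a,b) \subseteq [g(1), \max_{[0,1]} g]$, one has $\mathsf E[\xi\,1_{\{\eta \in (a,b)\}}] = \mathsf P(\eta \in (a,b))$; consequently $\mathsf E[\xi \mid \eta] = 1$ a.s. on the event $\{\eta \ge g(1)\}$. -/
open MeasureTheory ProbabilityTheory Set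

/-!
Since `F⁻¹` is nondecreasing, `g r = r - ∫₀ʳ F⁻¹` is concave on `[0,1]`, and `g 0 = 0 ≤ g 1`
because `∫₀¹ F⁻¹ = E ξ ≤ 1` (the quantile transform `F⁻¹(U)`, `U` uniform on `(0,1)`, has the
law of `ξ`). Hence for `c ≥ g 1` the superlevel set `{g ≥ c}` is an interval `[p, q]` with
`g p = g q = c`, and `∫_[p,q] F⁻¹ = (q - p) - (g q - g p) = q - p`. So the measures `F⁻¹(s) ds`
and `ds` on `{g ≥ g 1}` agree on the half-lines `g ⁻¹' [c, ∞)`, hence have the same image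
under `g`. Transported along `R` this says `E[ξ; η ∈ B] = P(η ∈ B)` for every Borel
`B ⊆ [g 1, ∞)`: the first claim, and the defining property of `E[ξ | η] = 1` on `{η ≥ g 1}`.
-/

section Quantile

variable (μ : Measure ℝ)

-- The paper's `F⁻¹` for a law on `[0, ∞)`; as `sInf ∅ = 0`, it vanishes on `[1, ∞)`.
noncomputable def nonnegQuantile (r : ℝ) : ℝ := sInf {x : ℝ | 0 ≤ x ∧ cdf μ x > r}

lemma nonnegQuantile_nonneg (r : ℝ) : 0 ≤ nonnegQuantile μ r :=
  Real.sInf_nonneg fun _ hx => hx.1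

lemma nonnegQuantile_of_one_le {r : ℝ} (hr : 1 ≤ r) : nonnegQuantile μ r = 0 := by
  have : {x : ℝ | 0 ≤ x ∧ cdf μ x > r} = ∅ :=
    eq_empty_of_forall_notMem fun x hx => ((cdf_le_one μ x).trans hr).not_gt hx.2
  rw [nonnegQuantile, this, Real.sInf_empty]

lemma exists_nonneg_cdf_gt {r : ℝ} (hr : r < 1) : ∃ x, 0 ≤ x ∧ cdf μ x > r :=
  (((tendsto_cdf_atTop μ).eventually (eventually_gt_nhds hr)).and
    (Filter.eventually_ge_atTop 0)).exists.imp fun _ h => ⟨h.2, h.1⟩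

lemma monotoneOn_nonnegQuantile : MonotoneOn (nonnegQuantile μ) (Iio 1) :=
  fun _ _ _ hq hpq => csInf_le_csInf ⟨0, fun _ hx => hx.1⟩ (exists_nonneg_cdf_gt μ hq)
    fun _ hx => ⟨hx.1, hpq.trans_lt hx.2⟩

lemma nonnegQuantile_le_of_lt_cdf {r x : ℝ} (hx : 0 ≤ x) (hr : r < cdf μ x) :
    nonnegQuantile μ r ≤ x :=
  csInf_le ⟨0, fun _ hy => hy.1⟩ ⟨hx, hr⟩

lemma le_cdf_of_nonnegQuantile_le {r x : ℝ} (hr : r < 1) (h : nonnegQuantile μ r ≤ x) :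
    r ≤ cdf μ x := by
  refine ge_of_tendsto (((cdf μ).right_continuous x).mono Ioi_subset_Ici_self)
    (eventually_nhdsWithin_of_forall fun y hy => ?_)
  obtain ⟨z, hz, hzy⟩ := exists_lt_of_csInf_lt (exists_nonneg_cdf_gt μ hr) (h.trans_lt hy)
  exact hz.2.le.trans ((cdf μ).mono hzy.le)

lemma measurable_nonnegQuantile : Measurable (nonnegQuantile μ) := by
  refine measurable_of_restrict_of_restrict_compl (measurableSet_Iio (a := 1)) ?_ ?_
  · exact Monotone.measurable fun p q hpq => monotoneOn_nonnegQuantile μ p.2 q.2 hpq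
  · have : (Iio (1 : ℝ))ᶜ.domRestrict (nonnegQuantile μ) = 0 :=
      funext fun r => nonnegQuantile_of_one_le μ (not_lt.1 r.2)
    rw [this]
    exact measurable_const

lemma map_nonnegQuantile [IsProbabilityMeasure μ] (hμ : μ (Iio 0) = 0) :
    (volume.restrict (Ioo 0 1)).map (nonnegQuantile μ) = μ := by
  refine Measure.ext_of_Iic _ _ fun x => ?_
  rw [Measure.map_apply (measurable_nonnegQuantile μ) measurableSet_Iic,
    Measure.restrict_apply (measurable_nonnegQuantile μ measurableSet_Iic)]
  rcases lt_or_ge x 0 with hx | hx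
  · have : nonnegQuantile μ ⁻¹' Iic x = ∅ :=
      eq_empty_of_forall_notMem fun r hr => (hx.trans_le (nonnegQuantile_nonneg μ r)).not_ge hr
    rw [this, empty_inter, measure_empty, measure_mono_null (Iic_subset_Iio.2 hx) hμ]
  rw [← ofReal_cdf]
  apply le_antisymm
  · calc _ ≤ volume (Ioc 0 (cdf μ x)) := measure_mono fun r (hr : r ∈ _ ∩ Ioo 0 1) =>
          ⟨hr.2.1, le_cdf_of_nonnegQuantile_le μ hr.2.2 hr.1⟩
      _ = _ := by rw [Real.volume_Ioc, sub_zero]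
  · calc ENNReal.ofReal (cdf μ x) = volume (Ioo 0 (cdf μ x)) := by rw [Real.volume_Ioo, sub_zero]
      _ ≤ _ := measure_mono fun r (hr : r ∈ Ioo 0 (cdf μ x)) =>
          show r ∈ _ ∩ Ioo 0 1 from
            ⟨nonnegQuantile_le_of_lt_cdf μ hx hr.2, hr.1, hr.2.trans_le (cdf_le_one μ x)⟩

lemma integral_nonnegQuantile [IsProbabilityMeasure μ] (hμ : μ (Iio 0) = 0) :
    ∫ r in Ioc 0 1, nonnegQuantile μ r = ∫ x, x ∂μ := by
  rw [integral_Ioc_eq_integral_Ioo]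
  conv_rhs => rw [← map_nonnegQuantile μ hμ]
  exact (integral_map (measurable_nonnegQuantile μ).aemeasurable aestronglyMeasurable_id).symm

lemma integrableOn_nonnegQuantile [IsProbabilityMeasure μ] (hμ : μ (Iio 0) = 0)
    (hint : Integrable id μ) :
    IntegrableOn (nonnegQuantile μ) (Ici 0) := by
  rw [← map_nonnegQuantile μ hμ, integrable_map_measure aestronglyMeasurable_id
    (measurable_nonnegQuantile μ).aemeasurable] at hint
  rw [integrableOn_Ici_iff_integrableOn_Ioi, ← Ioo_union_Ici_eq_Ioi zero_lt_one]
  exact IntegrableOn.union hint (integrableOn_zero.congr_fun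
    (fun r hr => (nonnegQuantile_of_one_le μ hr).symm) measurableSet_Ici)

end Quantile

section Primitive

variable {f : ℝ → ℝ} {a b : ℝ}

lemma setIntegral_Ioc_sub_setIntegral_Ioc {x y : ℝ} (hf : IntegrableOn f (Ioc a y))
    (hax : a ≤ x) (hxy : x ≤ y) :
    (∫ t in Ioc a y, f t) - ∫ t in Ioc a x, f t = ∫ t in Ioc x y, f t := by
  rw [← Ioc_union_Ioc_eq_Ioc hax hxy, setIntegral_union (Ioc_disjoint_Ioc_of_le le_rfl)
    measurableSet_Ioc (hf.mono_set (Ioc_subset_Ioc_right hxy))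
    (hf.mono_set (Ioc_subset_Ioc_left hax)), add_sub_cancel_left]

lemma monotone_setIntegral_Ioc (hf : IntegrableOn f (Ioi a)) (hf0 : ∀ x, 0 ≤ f x) :
    Monotone fun x => ∫ t in Ioc a x, f t :=
  fun _ _ hxy => setIntegral_mono_set (hf.mono_set Ioc_subset_Ioi_self)
    (ae_of_all _ fun t => hf0 t) (Ioc_subset_Ioc_right hxy).eventuallyLE

lemma convexOn_setIntegral_Ioc (hf : IntegrableOn f (Icc a b)) (hmono : MonotoneOn f (Ioo a b)) :
    ConvexOn ℝ (Icc a b) fun x => ∫ t in Ioc a x, f t := by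
  refine convexOn_of_slope_mono_adjacent (convex_Icc a b) fun {x y z} hx hz hxy hyz => ?_
  have hy : y ∈ Ioo a b := ⟨hx.1.trans_lt hxy, hyz.trans_le hz.2⟩
  have hint : ∀ p q, a ≤ p → q ≤ b → IntegrableOn f (Ioc p q) := fun p q hp hq =>
    hf.mono_set (Ioc_subset_Icc_self.trans (Icc_subset_Icc hp hq))
  have left : ∫ t in Ioc x y, f t ≤ (y - x) * f y :=
    calc ∫ t in Ioc x y, f t ≤ ∫ _ in Ioc x y, f y :=
          setIntegral_mono_on (hint x y hx.1 hy.2.le)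
            (integrableOn_const measure_Ioc_lt_top.ne) measurableSet_Ioc
            fun t ht => hmono ⟨hx.1.trans_lt ht.1, ht.2.trans_lt hy.2⟩ hy ht.2
      _ = (y - x) * f y := by simp [hxy.le]
  have right : (z - y) * f y ≤ ∫ t in Ioc y z, f t := by
    rw [integral_Ioc_eq_integral_Ioo]
    calc (z - y) * f y = ∫ _ in Ioo y z, f y := by simp [hyz.le]
      _ ≤ _ := setIntegral_mono_on (integrableOn_const measure_Ioo_lt_top.ne)
          ((hint y z hy.1.le hz.2).mono_set Ioo_subset_Ioc_self) measurableSet_Ioo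
          fun t ht => hmono hy ⟨hy.1.trans ht.1, ht.2.trans_le hz.2⟩ ht.1.le
  rw [setIntegral_Ioc_sub_setIntegral_Ioc (hint a y le_rfl hy.2.le) hx.1 hxy.le,
    setIntegral_Ioc_sub_setIntegral_Ioc (hint a z le_rfl hz.2) hy.1.le hyz.le]
  calc _ ≤ f y := (div_le_iff₀ (sub_pos.2 hxy)).2 (by linarith)
    _ ≤ _ := (le_div_iff₀ (sub_pos.2 hyz)).2 (by linarith)

lemma superlevelSet_eq_Icc {g : ℝ → ℝ} {c : ℝ} (hg : ContinuousOn g (Icc a b))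
    (hconc : ConcaveOn ℝ (Icc a b) g) (ha : g a ≤ c) (hb : g b ≤ c)
    (hne : {x ∈ Icc a b | c ≤ g x}.Nonempty) :
    ∃ p q, {x ∈ Icc a b | c ≤ g x} = Icc p q ∧ g p = c ∧ g q = c := by
  set S := {x ∈ Icc a b | c ≤ g x}
  have hclosed : IsClosed S := hg.preimage_isClosed_of_isClosed isClosed_Icc isClosed_Ici
  have hbddb : BddBelow S := ⟨a, fun x hx => hx.1.1⟩
  have hbdda : BddAbove S := ⟨b, fun x hx => hx.1.2⟩
  have hp := hclosed.csInf_mem hne hbddb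
  have hq := hclosed.csSup_mem hne hbdda
  refine ⟨sInf S, sSup S, ?_, le_antisymm ?_ hp.2, le_antisymm ?_ hq.2⟩
  · exact Subset.antisymm (fun x hx => ⟨csInf_le hbddb hx, le_csSup hbdda hx⟩)
      ((hconc.convex_ge c).ordConnected.out hp hq)
  · rcases hp.1.1.eq_or_lt with h | h
    · rwa [← h]
    refine ContinuousWithinAt.closure_le (s := Ico a (sInf S))
      (by rw [closure_Ico h.ne]; exact right_mem_Icc.2 h.le)
      ((hg _ hp.1).mono (Icc_subset_Icc_right hp.1.2 |>.trans' Ico_subset_Icc_self))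
      continuousWithinAt_const fun x hx => le_of_not_ge fun hcx =>
        (csInf_le hbddb ⟨⟨hx.1, hx.2.le.trans hp.1.2⟩, hcx⟩).not_gt hx.2
  · rcases hq.1.2.eq_or_lt with h | h
    · rwa [h]
    refine ContinuousWithinAt.closure_le (s := Ioc (sSup S) b)
      (by rw [closure_Ioc h.ne]; exact left_mem_Icc.2 h.le)
      ((hg _ hq.1).mono (Icc_subset_Icc_left hq.1.1 |>.trans' Ioc_subset_Icc_self))
      continuousWithinAt_const fun x hx => le_of_not_ge fun hcx =>
        (le_csSup hbdda ⟨⟨hq.1.1.trans hx.1.le, hx.2⟩, hcx⟩).not_gt hx.1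

variable {g : ℝ → ℝ}

lemma setIntegral_superlevelSet_eq_volume_real {c : ℝ} (hf : IntegrableOn f (Icc a b))
    (hmono : MonotoneOn f (Ioo a b)) (hg : ∀ x, g x = x - ∫ t in Ioc a x, f t)
    (ha : g a ≤ c) (hb : g b ≤ c) :
    ∫ x in {x ∈ Icc a b | c ≤ g x}, f x = volume.real {x ∈ Icc a b | c ≤ g x} := by
  have g_eq : g = (fun x => x) - fun x => ∫ t in Ioc a x, f t := funext hg
  have hconc : ConcaveOn ℝ (Icc a b) g :=
    g_eq ▸ (concaveOn_id (convex_Icc a b)).sub (convexOn_setIntegral_Ioc hf hmono)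
  have hcont : ContinuousOn g (Icc a b) :=
    g_eq ▸ continuousOn_id.sub (intervalIntegral.continuousOn_primitive hf)
  rcases eq_empty_or_nonempty {x ∈ Icc a b | c ≤ g x} with he | hne
  · rw [he]
    simp
  obtain ⟨p, q, hS, hp, hq⟩ := superlevelSet_eq_Icc hcont hconc ha hb hne
  have hpq : p ≤ q := nonempty_Icc.1 (hS ▸ hne)
  have hsub : Icc p q ⊆ Icc a b := hS ▸ sep_subset _ _
  rw [hS, integral_Icc_eq_integral_Ioc, Real.volume_real_Icc_of_le hpq,
    ← setIntegral_Ioc_sub_setIntegral_Ioc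
      (hf.mono_set (Ioc_subset_Icc_self.trans (Icc_subset_Icc_right (hsub ⟨hpq, le_rfl⟩).2)))
      (hsub ⟨le_rfl, hpq⟩).1 hpq]
  linarith [hg p, hg q]

lemma setIntegral_preimage_eq_volume_real (hf : IntegrableOn f (Icc a b)) (hf0 : ∀ x, 0 ≤ f x)
    (hmono : MonotoneOn f (Ioo a b)) (hg : ∀ x, g x = x - ∫ t in Ioc a x, f t)
    (hgm : Measurable g) (hab : g a ≤ g b) {B : Set ℝ} (hB : MeasurableSet B)
    (hBb : B ⊆ Ici (g b)) :
    ∫ x in g ⁻¹' B ∩ Icc a b, f x = volume.real (g ⁻¹' B ∩ Icc a b) := by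
  set μ := volume.restrict (Icc a b)
  have : IsFiniteMeasure (μ.withDensity fun x => ENNReal.ofReal (f x)) :=
    isFiniteMeasure_withDensity_ofReal hf.2
  have hlint : ∀ s, MeasurableSet s → s ⊆ Ici (g b) →
      (μ.withDensity fun x => ENNReal.ofReal (f x)).map g s = μ.map g s := by
    suffices ((μ.withDensity fun x => ENNReal.ofReal (f x)).map g).restrict (Ici (g b)) =
        (μ.map g).restrict (Ici (g b)) by
      intro s hs hsb
      simpa [Measure.restrict_apply hs, inter_eq_left.2 hsb] using congrArg (· s) this
    refine Measure.ext_of_Ici _ _ fun c => ?_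
    have hS : g ⁻¹' Ici (c ⊔ g b) ∩ Icc a b = {x ∈ Icc a b | c ⊔ g b ≤ g x} := inter_comm _ _
    have hc := hgm (measurableSet_Ici (a := c ⊔ g b))
    rw [Measure.restrict_apply measurableSet_Ici, Measure.restrict_apply measurableSet_Ici,
      Ici_inter_Ici, Measure.map_apply hgm measurableSet_Ici,
      Measure.map_apply hgm measurableSet_Ici, withDensity_apply _ hc, Measure.restrict_apply hc,
      Measure.restrict_restrict hc, hS, ← ofReal_integral_eq_lintegral_ofReal
        (hf.mono_set (sep_subset _ _)) (ae_of_all _ fun x => hf0 x),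
      setIntegral_superlevelSet_eq_volume_real hf hmono hg (hab.trans le_sup_right) le_sup_right,
      measureReal_def, ENNReal.ofReal_toReal (measure_ne_top_of_subset (sep_subset _ _) ?_)]
    exact (measure_Icc_lt_top).ne
  have := hlint B hB hBb
  rw [Measure.map_apply hgm hB, Measure.map_apply hgm hB, withDensity_apply _ (hgm hB),
    Measure.restrict_apply (hgm hB), Measure.restrict_restrict (hgm hB)] at this
  rw [integral_eq_lintegral_of_nonneg_ae (ae_of_all _ fun x => hf0 x)
    (hf.mono_set inter_subset_right).1, this, measureReal_def]

end Primitive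

lemma condExp_ae_eq_one_of_setIntegral_inter {Ω : Type*} {m m₀ : MeasurableSpace Ω}
    {μ : Measure Ω} [IsFiniteMeasure μ] (hm : m ≤ m₀) {X : Ω → ℝ} (hX : Integrable X μ)
    {A : Set Ω} (hA : MeasurableSet[m] A)
    (h : ∀ s, MeasurableSet[m] s → ∫ ω in s ∩ A, X ω ∂μ = μ.real (s ∩ A)) :
    ∀ᵐ ω ∂μ, ω ∈ A → μ[X|m] ω = 1 := by
  have hA₀ : MeasurableSet[m₀] A := hm A hA
  have hind : A.indicator 1 =ᵐ[μ] μ[A.indicator X|m] :=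
    ae_eq_condExp_of_forall_setIntegral_eq hm (hX.indicator hA₀)
      (fun _ _ _ => ((integrable_const 1).indicator hA₀).integrableOn)
      (fun s hs _ => by
        rw [setIntegral_indicator hA₀, setIntegral_indicator hA₀, h s hs, Pi.one_def,
          setIntegral_const, smul_eq_mul, mul_one])
      (stronglyMeasurable_const.indicator hA).aestronglyMeasurable
  filter_upwards [hind, condExp_indicator hX hA] with ω hind hpull hω
  rw [indicator_of_mem hω] at hind hpull
  rw [← hpull, ← hind, Pi.one_apply]

/-- the key identity (2.1) of the paper: with `F` the cdf of a
nonnegative `ξ₀` with `E ξ₀ ≤ 1`, `F⁻¹` its quantile function,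
`h (r) = ∫_0^r F⁻¹`, `g (r) = r - h (r)`, `R` uniform on `[0,1]`,
`η = g (R)` and `ξ = F⁻¹ (R)`:
for any interval `(a,b) ⊆ [g 1, max_{[0,1]} g]` one has
`E[ξ 1_{η ∈ (a,b)}] = P (η ∈ (a,b))`; consequently `E[ξ | η] = 1` a.s. on
`{η ≥ g 1}`. -/
theorem key_embedding_identity {Ω : Type*} {mΩ : MeasurableSpace Ω}
    (P : Measure Ω) [IsProbabilityMeasure P]
    (ξ₀ : Ω → ℝ) (hξ₀m : Measurable ξ₀) (hξ₀0 : ∀ ω, 0 ≤ ξ₀ ω)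
    (hξ₀int : Integrable ξ₀ P) (hξ₀1 : ∫ ω, ξ₀ ω ∂P ≤ 1)
    (F : ℝ → ℝ) (hF : F = fun x => (P {ω | ξ₀ ω ≤ x}).toReal)
    (Finv : ℝ → ℝ) (hFinv : Finv = fun r => sInf {x : ℝ | 0 ≤ x ∧ F x > r})
    (h : ℝ → ℝ) (hh : h = fun r => ∫ s in Ioc (0 : ℝ) r, Finv s)
    (g : ℝ → ℝ) (hg : g = fun r => r - h r)
    (R : Ω → ℝ) (hRm : Measurable R)
    (hR : Measure.map R P = (volume : Measure ℝ).restrict (Icc 0 1)) :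
    (∀ a b : ℝ, g 1 ≤ a → b ≤ sSup (g '' Icc 0 1) →
      ∫ ω in {ω | g (R ω) ∈ Ioo a b}, Finv (R ω) ∂P
        = (P {ω | g (R ω) ∈ Ioo a b}).toReal) ∧
    (∀ᵐ ω ∂P, g 1 ≤ g (R ω) →
      (P[fun ω => Finv (R ω) |
          MeasurableSpace.comap (fun ω => g (R ω)) inferInstance]) ω = 1) := by
  set μ := P.map ξ₀
  have : IsProbabilityMeasure μ := Measure.isProbabilityMeasure_map hξ₀m.aemeasurable
  have hμ0 : μ (Iio 0) = 0 := by
    rw [Measure.map_apply hξ₀m measurableSet_Iio]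
    exact measure_mono_null (fun ω hω => (hξ₀0 ω).not_gt hω) measure_empty
  have hFinv_eq : Finv = nonnegQuantile μ := by
    have hF_eq : F = cdf μ := funext fun x => by
      rw [hF, cdf_eq_real, measureReal_def, Measure.map_apply hξ₀m measurableSet_Iic]; rfl
    rw [hFinv, hF_eq]; rfl
  have hEξ : ∫ r in Ioc 0 1, Finv r = ∫ ω, ξ₀ ω ∂P := by
    rw [hFinv_eq, integral_nonnegQuantile μ hμ0]
    exact integral_map hξ₀m.aemeasurable aestronglyMeasurable_id
  have hint : IntegrableOn Finv (Ici 0) := hFinv_eq ▸ integrableOn_nonnegQuantile μ hμ0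
    ((integrable_map_measure aestronglyMeasurable_id hξ₀m.aemeasurable).2 hξ₀int)
  have hint₀₁ : IntegrableOn Finv (Icc 0 1) := hint.mono_set Icc_subset_Ici_self
  have hFinv0 : ∀ r, 0 ≤ Finv r := hFinv_eq ▸ nonnegQuantile_nonneg μ
  have hmono : MonotoneOn Finv (Ioo 0 1) :=
    hFinv_eq ▸ (monotoneOn_nonnegQuantile μ).mono fun _ hr => hr.2
  have hg_eq : ∀ x, g x = x - ∫ t in Ioc 0 x, Finv t := fun x => by rw [hg, hh]
  have hgm : Measurable g := by
    rw [show g = (fun x => x) - fun x => ∫ t in Ioc 0 x, Finv t from funext hg_eq]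
    exact measurable_id'.sub
      (monotone_setIntegral_Ioc (hint.mono_set Ioi_subset_Ici_self) hFinv0).measurable
  have hg01 : g 0 ≤ g 1 := by rw [hg_eq, hg_eq, hEξ]; simp [hξ₀1]
  have key : ∀ B, MeasurableSet B → B ⊆ Ici (g 1) →
      ∫ ω in R ⁻¹' (g ⁻¹' B), Finv (R ω) ∂P = P.real (R ⁻¹' (g ⁻¹' B)) := by
    intro B hB hBg
    rw [← setIntegral_map (hgm hB) (hR ▸ hint₀₁.1) hRm.aemeasurable,
      ← map_measureReal_apply hRm (hgm hB), hR, Measure.restrict_restrict (hgm hB),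
      measureReal_restrict_apply (hgm hB)]
    exact setIntegral_preimage_eq_volume_real hint₀₁ hFinv0 hmono hg_eq hgm hg01 hB hBg
  refine ⟨fun a b ha _ => key _ measurableSet_Ioo fun x hx => ha.trans hx.1.le, ?_⟩
  have hX : Integrable (fun ω => Finv (R ω)) P :=
    (integrable_map_measure (hR ▸ hint₀₁.1) hRm.aemeasurable).1 (hR ▸ hint₀₁)
  refine condExp_ae_eq_one_of_setIntegral_inter (hgm.comp hRm).comap_le hX
    (A := (fun ω => g (R ω)) ⁻¹' Ici (g 1)) ⟨Ici (g 1), measurableSet_Ici, rfl⟩ ?_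
  rintro _ ⟨B, hB, rfl⟩
  exact key _ (hB.inter measurableSet_Ici) inter_subset_right
end
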